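/- arXiv:1004.3104 — 7 statements merged into one kernel-verified Lean document; each statement's English description precedes it below -/
import Mathlib

section
/- Every real polynomial f in one variable t that is non-negative on the interval [-1,1] admits a representation f = s₀ + s₁·(1-t²), where s₀ and s₁ are each sums of two squares of polynomials, with deg(s₀) ≤ deg(f)+1 and deg(s₁) ≤ deg(f)-1. -/
open Polynomial
lemma nonneg_closure (g : Polynomial ℝ) (s : Set ℝ) (h : ∀ x ∈ s, 0 ≤ g.eval x) :
    ∀ x ∈ closure s, 0 ≤ g.eval x := fun x hx =>
  closure_minimal h (isClosed_le continuous_const g.continuous_aeval) hx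


lemma natDegree_sq_add_sq (p q : Polynomial ℝ) (h : p ≠ 0) (hle : q.natDegree ≤ p.natDegree) :
    (p ^ 2 + q ^ 2).natDegree = 2 * p.natDegree := by
  have hco : (p ^ 2 + q ^ 2).coeff (2 * p.natDegree) ≠ 0 := by
    rw [coeff_add]
    have h1 : (p ^ 2).coeff (2 * p.natDegree) = p.leadingCoeff ^ 2 := by
      simpa [mul_comm] using coeff_pow_mul_natDegree p 2
    have h2 : 0 ≤ (q ^ 2).coeff (2 * p.natDegree) := by
      rcases lt_or_eq_of_le hle with hlt | heq
      · rw [coeff_eq_zero_of_natDegree_lt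
          (by calc (q^2).natDegree ≤ 2 * q.natDegree := natDegree_pow_le_of_le 2 (le_refl _)
                _ < 2 * p.natDegree := by omega)]
      · rw [← heq]
        have : (q ^ 2).coeff (2 * q.natDegree) = q.leadingCoeff ^ 2 := by
          simpa [mul_comm] using coeff_pow_mul_natDegree q 2
        rw [this]; positivity
    have h3 : 0 < p.leadingCoeff ^ 2 := by
      have := leadingCoeff_ne_zero.mpr h
      positivity
    rw [h1]; nlinarith
  have hub : (p ^ 2 + q ^ 2).natDegree ≤ 2 * p.natDegree := by
    apply natDegree_add_le_of_degree_le
    · exact natDegree_pow_le_of_le 2 (le_refl _)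
    · calc (q^2).natDegree ≤ 2 * q.natDegree := natDegree_pow_le_of_le 2 (le_refl _)
        _ ≤ 2 * p.natDegree := by omega
  exact le_antisymm hub (le_natDegree_of_ne_zero hco)

lemma even_natDegree_sq_add_sq (p q : Polynomial ℝ) : Even (p ^ 2 + q ^ 2).natDegree := by
  rcases le_total q.natDegree p.natDegree with hle | hle
  · by_cases h : p = 0
    · by_cases hq : q = 0
      · simp [h, hq]
      · rw [add_comm, natDegree_sq_add_sq q p hq (by simp [h])]
        exact even_two_mul _
    · rw [natDegree_sq_add_sq p q h hle]; exact even_two_mul _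
  · by_cases hq : q = 0
    · by_cases h : p = 0
      · simp [h, hq]
      · rw [natDegree_sq_add_sq p q h (by simp [hq])]; exact even_two_mul _
    · rw [add_comm, natDegree_sq_add_sq q p hq hle]; exact even_two_mul _


lemma sum_two_sq_aux : ∀ d : ℕ, ∀ f : Polynomial ℝ, f.natDegree ≤ d →
    (∀ x : ℝ, 0 ≤ f.eval x) → ∃ p q : Polynomial ℝ, f = p ^ 2 + q ^ 2 := by
  intro d
  induction d using Nat.strong_induction_on with
  | _ d IH =>
    intro f hdeg hf
    by_cases h0 : f = 0
    · exact ⟨0, 0, by simp [h0]⟩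
    by_cases hd0 : f.natDegree = 0
    · refine ⟨C (Real.sqrt (f.coeff 0)), 0, ?_⟩
      have hc : 0 ≤ f.coeff 0 := by
        rw [coeff_zero_eq_eval_zero]; exact hf 0
      have hfc : f = C (f.coeff 0) := eq_C_of_natDegree_eq_zero hd0
      rw [← C_pow, Real.sq_sqrt hc]
      simpa using hfc
    -- f has positive degree; find a complex root
    have hpos : 0 < f.natDegree := Nat.pos_of_ne_zero hd0
    obtain ⟨z, hz⟩ : ∃ z : ℂ, aeval z f = 0 := by
      obtain ⟨z, hz⟩ := Complex.exists_root (f := f.map (algebraMap ℝ ℂ))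
        (by rwa [degree_map, ← natDegree_pos_iff_degree_pos])
      exact ⟨z, by rwa [aeval_def, ← eval_map]⟩
    by_cases him : z.im = 0
    · -- real root r
      set r := z.re with hr
      have hzr : z = (r : ℂ) := Complex.ext rfl (by simp [him])
      have hroot : f.IsRoot r := by
        have h1 : (algebraMap ℝ ℂ) (f.eval r) = 0 := by
          rw [← eval₂_at_apply, ← aeval_def]
          rw [show (algebraMap ℝ ℂ) r = z by rw [hzr]; rfl]
          exact hz
        exact (map_eq_zero_iff _ (algebraMap ℝ ℂ).injective).mp h1
      set h := f /ₘ (X - C r) with hh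
      have hfact : (X - C r) * h = f := mul_divByMonic_eq_iff_isRoot.mpr hroot
      have hfac : ∀ x : ℝ, f.eval x = (x - r) * h.eval x := by
        intro x; rw [← hfact]; simp
      -- h(r) = 0
      have hup : ∀ x ∈ Set.Ioi r, 0 ≤ h.eval x := fun x hx => by
        have := hf x; rw [hfac x] at this
        exact nonneg_of_mul_nonneg_right this (by simp at hx; linarith)
      have hdown : ∀ x ∈ Set.Iio r, 0 ≤ (-h).eval x := fun x hx => by
        have := hf x; rw [hfac x] at this
        simp only [eval_neg]
        nlinarith [this, show x - r < 0 by simp at hx; linarith]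
      have h1 : 0 ≤ h.eval r := nonneg_closure h _ hup r (by rw [closure_Ioi]; exact Set.self_mem_Ici)
      have h2 : h.eval r ≤ 0 := by
        have := nonneg_closure (-h) _ hdown r (by rw [closure_Iio]; exact Set.self_mem_Iic)
        simpa using this
      have hroot2 : h.IsRoot r := by rw [IsRoot.def]; linarith
      set g := h /ₘ (X - C r) with hg
      have hfact2 : (X - C r) * g = h := mul_divByMonic_eq_iff_isRoot.mpr hroot2
      have hfg : f = (X - C r) ^ 2 * g := by rw [← hfact, ← hfact2]; ring
      have hgne : g ≠ 0 := fun hgz => h0 (by rw [hfg, hgz, mul_zero])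
      have hdegg : g.natDegree + 2 ≤ d := by
        have : f.natDegree = 2 + g.natDegree := by
          rw [hfg, natDegree_mul (pow_ne_zero 2 (X_sub_C_ne_zero r)) hgne]
          simp [natDegree_pow]
        omega
      have hgnn : ∀ x : ℝ, 0 ≤ g.eval x := by
        have hne : ∀ x : ℝ, x ≠ r → 0 ≤ g.eval x := by
          intro x hx
          have := hf x
          rw [hfg] at this
          simp only [eval_mul, eval_pow, eval_sub, eval_X, eval_C] at this
          nlinarith [sq_nonneg (x - r), this, sq_pos_of_ne_zero (sub_ne_zero.mpr hx : x - r ≠ 0)]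
        intro x
        by_cases hx : x = r
        · refine nonneg_closure g {y | y ≠ r} hne x ?_
          have : Dense {y : ℝ | y ≠ r} := dense_compl_singleton r
          rw [this.closure_eq]; trivial
        · exact hne x hx
      obtain ⟨p, q, hpq⟩ := IH (g.natDegree) (by omega) g le_rfl hgnn
      exact ⟨(X - C r) * p, (X - C r) * q, by rw [hfg, hpq]; ring⟩
    · -- nonreal root: quadratic factor
      have hdvd := f.quadratic_dvd_of_aeval_eq_zero_im_ne_zero hz him
      set s : Polynomial ℝ := X ^ 2 - C (2 * z.re) * X + C (‖z‖ ^ 2) with hs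
      have hsq : s = (X - C z.re) ^ 2 + (C z.im) ^ 2 := by
        have hnorm : ‖z‖ ^ 2 = z.re ^ 2 + z.im ^ 2 := by
          rw [Complex.sq_norm, Complex.normSq_apply]; ring
        rw [hs, hnorm]
        simp only [C_add, C_pow, C_mul, map_ofNat]
        ring
      obtain ⟨g, hfg⟩ := hdvd
      have hspos : ∀ x : ℝ, 0 < s.eval x := by
        intro x
        rw [hsq]
        simp only [eval_add, eval_pow, eval_sub, eval_X, eval_C]
        have : z.im ^ 2 > 0 := by positivity
        nlinarith [sq_nonneg (x - z.re)]
      have hgne : g ≠ 0 := fun hgz => h0 (by rw [hfg, hgz, mul_zero])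
      have hsdeg : s.natDegree = 2 := by
        rw [hs]; compute_degree!
      have hdegg : g.natDegree + 2 ≤ d := by
        have hsne : s ≠ 0 := fun hc => by simp [hc] at hsdeg
        have : f.natDegree = 2 + g.natDegree := by
          rw [hfg, natDegree_mul hsne hgne, hsdeg]
        omega
      have hgnn : ∀ x : ℝ, 0 ≤ g.eval x := by
        intro x
        have := hf x
        rw [hfg, eval_mul] at this
        nlinarith [hspos x]
      obtain ⟨p, q, hpq⟩ := IH (g.natDegree) (by omega) g le_rfl hgnn
      refine ⟨(X - C z.re) * p - C z.im * q, (X - C z.re) * q + C z.im * p, ?_⟩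
      rw [hfg, hpq, hsq]; ring

lemma sum_two_sq (f : Polynomial ℝ) (hf : ∀ x : ℝ, 0 ≤ f.eval x) :
    ∃ p q : Polynomial ℝ, f = p ^ 2 + q ^ 2 :=
  sum_two_sq_aux f.natDegree f le_rfl hf


noncomputable def QUAD (u v : ℝ) : Polynomial ℝ := C (u/2) + C v * X + C (u/2) * X^2

lemma quad_eval (u v x : ℝ) : (QUAD u v).eval x = u/2 + v*x + u/2*x^2 := by
  simp [QUAD]

lemma quad_deg (u v : ℝ) : (QUAD u v).natDegree ≤ 2 := by
  unfold QUAD; compute_degree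

lemma quad_nonneg {u v : ℝ} (h1 : 0 ≤ u + v) (h2 : 0 ≤ u - v) (x : ℝ) :
    0 ≤ (QUAD u v).eval x := by
  rw [quad_eval]
  nlinarith [mul_nonneg h1 (sq_nonneg (1+x)), mul_nonneg h2 (sq_nonneg (1-x))]

lemma lin_rep {L : Polynomial ℝ} {a : ℝ} (ha : 1 ≤ a) (h : L = C a - X ∨ L = X + C a) :
    ∃ (a0 : Polynomial ℝ) (c : ℝ), L = a0 + C c * (1 - X^2) ∧ 0 ≤ c ∧
      (∀ x, 0 ≤ a0.eval x) ∧ a0.natDegree ≤ 2 := by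
  rcases h with h | h
  · refine ⟨QUAD a (-1), a/2, ?_, by linarith, fun x => quad_nonneg (by linarith) (by linarith) x, quad_deg _ _⟩
    apply Polynomial.funext; intro y
    rw [h]; simp [quad_eval]; ring
  · refine ⟨QUAD a 1, a/2, ?_, by linarith, fun x => quad_nonneg (by linarith) (by linarith) x, quad_deg _ _⟩
    apply Polynomial.funext; intro y
    rw [h]; simp [quad_eval]; ring

lemma pair_rep {L1 L2 : Polynomial ℝ} {a b : ℝ} (ha : 1 ≤ a) (hb : 1 ≤ b)
    (h1 : L1 = C a - X ∨ L1 = X + C a) (h2 : L2 = C b - X ∨ L2 = X + C b) :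
    ∃ (a0 : Polynomial ℝ) (c : ℝ), L1 * L2 = a0 + C c * (1 - X^2) ∧ 0 ≤ c ∧
      (∀ x, 0 ≤ a0.eval x) ∧ a0.natDegree ≤ 2 := by
  have hab : 1 ≤ a * b := by nlinarith
  rcases h1 with h1 | h1 <;> rcases h2 with h2 | h2
  · refine ⟨QUAD (a*b+1) (-(a+b)), (a*b-1)/2, ?_, by linarith, fun x => quad_nonneg (by nlinarith) (by nlinarith) x, quad_deg _ _⟩
    apply Polynomial.funext; intro y
    rw [h1, h2]; simp [quad_eval]; ring
  · refine ⟨QUAD (a*b-1) (a-b), (a*b+1)/2, ?_, by linarith, fun x => quad_nonneg (by nlinarith) (by nlinarith) x, quad_deg _ _⟩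
    apply Polynomial.funext; intro y
    rw [h1, h2]; simp [quad_eval]; ring
  · refine ⟨QUAD (a*b-1) (b-a), (a*b+1)/2, ?_, by linarith, fun x => quad_nonneg (by nlinarith) (by nlinarith) x, quad_deg _ _⟩
    apply Polynomial.funext; intro y
    rw [h1, h2]; simp [quad_eval]; ring
  · refine ⟨QUAD (a*b+1) (a+b), (a*b-1)/2, ?_, by linarith, fun x => quad_nonneg (by nlinarith) (by nlinarith) x, quad_deg _ _⟩
    apply Polynomial.funext; intro y
    rw [h1, h2]; simp [quad_eval]; ring



lemma strip (f : Polynomial ℝ) (hf : ∀ x ∈ Set.Icc (-1:ℝ) 1, 0 ≤ f.eval x)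
    (x0 : ℝ) (hx0 : f.eval x0 < 0) :
    ∃ (a : ℝ) (h1 : Polynomial ℝ), 1 ≤ a ∧
      (f = (C a - X) * h1 ∨ f = (X + C a) * h1) ∧
      (∀ x ∈ Set.Icc (-1:ℝ) 1, 0 ≤ h1.eval x) ∧ h1.natDegree + 1 = f.natDegree := by
  have hfne : f ≠ 0 := by intro h; rw [h] at hx0; simp at hx0
  have hdpos : 1 ≤ f.natDegree := by
    by_contra hd
    push_neg at hd
    interval_cases h : f.natDegree
    · have h0 := hf 0 (by norm_num)
      rw [eq_C_of_natDegree_eq_zero h] at hx0 h0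
      simp at hx0 h0; linarith
  have hcont : ∀ s : Set ℝ, ContinuousOn (fun x => f.eval x) s :=
    fun s => (f.continuous_aeval).continuousOn
  have hx0pos : 1 < x0 ∨ x0 < -1 := by
    by_contra hc
    push_neg at hc
    exact absurd (hf x0 ⟨hc.2, hc.1⟩) (not_le.2 hx0)
  rcases hx0pos with hx01 | hx01
  · -- root r ≥ 1
    obtain ⟨r, hrmem, hr⟩ := intermediate_value_Icc' (le_of_lt hx01) (hcont _)
      (Set.mem_Icc.mpr ⟨le_of_lt hx0, hf 1 (by norm_num)⟩)
    have hr1 : 1 ≤ r := (Set.mem_Icc.mp hrmem).1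
    have hroot : f.IsRoot r := hr
    set h := f /ₘ (X - C r) with hh
    have hfact : (X - C r) * h = f := mul_divByMonic_eq_iff_isRoot.mpr hroot
    refine ⟨r, -h, hr1, Or.inl (by rw [← hfact]; ring), ?_, ?_⟩
    · have hico : ∀ x ∈ Set.Ico (-1:ℝ) 1, 0 ≤ (-h).eval x := by
        intro x hx
        obtain ⟨hx1, hx2⟩ := Set.mem_Ico.mp hx
        have hfx := hf x ⟨hx1, le_of_lt hx2⟩
        have hfeq : f.eval x = (x - r) * h.eval x := by rw [← hfact]; simp
        have hmul : 0 ≤ (r - x) * (-h).eval x := by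
          simp only [eval_neg]; nlinarith
        exact nonneg_of_mul_nonneg_right hmul (by linarith)
      intro x hx
      refine nonneg_closure (-h) _ hico x ?_
      rwa [closure_Ico (by norm_num : (-1:ℝ) ≠ 1)]
    · rw [natDegree_neg, hh, natDegree_divByMonic f (monic_X_sub_C r), natDegree_X_sub_C]
      omega
  · -- root r ≤ -1
    obtain ⟨r, hrmem, hr⟩ := intermediate_value_Icc (le_of_lt hx01) (hcont _)
      (Set.mem_Icc.mpr ⟨le_of_lt hx0, hf (-1) (by norm_num)⟩)
    have hr1 : r ≤ -1 := (Set.mem_Icc.mp hrmem).2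
    have hroot : f.IsRoot r := hr
    set h := f /ₘ (X - C r) with hh
    have hfact : (X - C r) * h = f := mul_divByMonic_eq_iff_isRoot.mpr hroot
    refine ⟨-r, h, by linarith, Or.inr (by rw [← hfact, C_neg]; ring), ?_, ?_⟩
    · have hioc : ∀ x ∈ Set.Ioc (-1:ℝ) 1, 0 ≤ h.eval x := by
        intro x hx
        obtain ⟨hx1, hx2⟩ := Set.mem_Ioc.mp hx
        have hfx := hf x ⟨le_of_lt hx1, hx2⟩
        have hfeq : f.eval x = (x - r) * h.eval x := by rw [← hfact]; simp
        have hmul : 0 ≤ (x - r) * h.eval x := by nlinarith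
        exact nonneg_of_mul_nonneg_right hmul (by linarith)
      intro x hx
      refine nonneg_closure h _ hioc x ?_
      rwa [closure_Ioc (by norm_num : (-1:ℝ) ≠ 1)]
    · rw [hh, natDegree_divByMonic f (monic_X_sub_C r), natDegree_X_sub_C]
      omega

lemma glue (f M h' a0 u0 u1 : Polynomial ℝ) (c : ℝ) (e : ℕ)
    (hfM : f = M * h') (hM : M = a0 + C c * (1 - X^2)) (hc : 0 ≤ c)
    (ha0 : ∀ x, 0 ≤ a0.eval x) (hd0 : a0.natDegree ≤ 2)
    (hh' : h' = u0 + u1 * (1 - X^2))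
    (hu0 : ∀ x, 0 ≤ u0.eval x) (hu1 : ∀ x, 0 ≤ u1.eval x)
    (hdu0 : u0.natDegree ≤ e) (hdu1 : u1 = 0 ∨ u1.natDegree + 2 ≤ e) :
    ∃ s0 s1 : Polynomial ℝ, f = s0 + s1 * (1 - X^2) ∧
      (∀ x, 0 ≤ s0.eval x) ∧ (∀ x, 0 ≤ s1.eval x) ∧
      s0.natDegree ≤ e + 2 ∧ s1.natDegree + 2 ≤ e + 2 := by
  refine ⟨a0 * u0 + (C c * u1) * (1 - X^2)^2, a0 * u1 + C c * u0, ?_, ?_, ?_, ?_, ?_⟩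
  · rw [hfM, hM, hh']; ring
  · intro x
    simp only [eval_add, eval_mul, eval_pow, eval_sub, eval_one, eval_C, eval_X]
    exact add_nonneg (mul_nonneg (ha0 x) (hu0 x))
      (mul_nonneg (mul_nonneg hc (hu1 x)) (sq_nonneg (1 - x^2)))
  · intro x
    simp only [eval_add, eval_mul, eval_C]
    exact add_nonneg (mul_nonneg (ha0 x) (hu1 x)) (mul_nonneg hc (hu0 x))
  · apply natDegree_add_le_of_degree_le
    · calc (a0*u0).natDegree ≤ a0.natDegree + u0.natDegree := natDegree_mul_le
        _ ≤ e + 2 := by omega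
    · rcases hdu1 with h | h
      · simp [h]
      · calc ((C c * u1) * (1 - X^2)^2).natDegree
            ≤ (C c * u1).natDegree + ((1 - X^2 : Polynomial ℝ)^2).natDegree := natDegree_mul_le
          _ ≤ (C c).natDegree + u1.natDegree + 2 * (1 - X^2 : Polynomial ℝ).natDegree := by
              have h1 : (C c * u1).natDegree ≤ (C c).natDegree + u1.natDegree := natDegree_mul_le
              have h2 : ((1 - X^2 : Polynomial ℝ)^2).natDegree ≤ 2 * (1 - X^2 : Polynomial ℝ).natDegree :=
                natDegree_pow_le
              omega
          _ ≤ e + 2 := by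
              have h3 : (1 - X^2 : Polynomial ℝ).natDegree ≤ 2 := by compute_degree
              have h4 : (C c).natDegree = 0 := natDegree_C c
              omega
  · have hb : (a0 * u1 + C c * u0).natDegree ≤ e := by
      apply natDegree_add_le_of_degree_le
      · rcases hdu1 with h | h
        · simp [h]
        · calc (a0*u1).natDegree ≤ a0.natDegree + u1.natDegree := natDegree_mul_le
            _ ≤ e := by omega
      · calc (C c * u0).natDegree ≤ (C c).natDegree + u0.natDegree := natDegree_mul_le
          _ ≤ e := by simp [natDegree_C]; omega
    omega

lemma poly_odd_neg (h : Polynomial ℝ) (hodd : Odd h.natDegree) : ∃ x : ℝ, h.eval x < 0 := by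
  by_contra hc
  push_neg at hc
  obtain ⟨p, q, hpq⟩ := sum_two_sq h hc
  have hev := even_natDegree_sq_add_sq p q
  rw [← hpq] at hev
  exact (Nat.not_even_iff_odd.mpr hodd) hev

lemma AUX : ∀ d : ℕ, ∀ f : Polynomial ℝ, f.natDegree = d →
    (∀ x ∈ Set.Icc (-1:ℝ) 1, 0 ≤ f.eval x) →
    ∃ s0 s1 : Polynomial ℝ, f = s0 + s1 * (1 - X^2) ∧
      (∀ x, 0 ≤ s0.eval x) ∧ (∀ x, 0 ≤ s1.eval x) ∧
      s0.natDegree ≤ 2*((d+1)/2) ∧ (s1 = 0 ∨ s1.natDegree + 2 ≤ 2*((d+1)/2)) := by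
  intro d
  induction d using Nat.strong_induction_on with
  | _ d IH =>
    intro f hd hf
    by_cases hnn : ∀ x : ℝ, 0 ≤ f.eval x
    · exact ⟨f, 0, by ring, hnn, by simp, by omega, Or.inl rfl⟩
    · push_neg at hnn
      obtain ⟨x0, hx0⟩ := hnn
      obtain ⟨a, h1, ha, hform, hh1nn, hdeg1⟩ := strip f hf x0 hx0
      have hL1 : ∃ L1 : Polynomial ℝ, f = L1 * h1 ∧ (L1 = C a - X ∨ L1 = X + C a) := by
        rcases hform with h | h
        · exact ⟨C a - X, h, Or.inl rfl⟩
        · exact ⟨X + C a, h, Or.inr rfl⟩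
      obtain ⟨L1, hf1eq, hO1⟩ := hL1
      rcases Nat.even_or_odd d with hev | hod
      · -- d even, strip two factors
        have hd2 : d % 2 = 0 := Nat.even_iff.mp hev
        have hodd1 : Odd h1.natDegree := Nat.odd_iff.mpr (by omega)
        obtain ⟨x1, hx1⟩ := poly_odd_neg h1 hodd1
        obtain ⟨b, h2, hb, hform2, hh2nn, hdeg2⟩ := strip h1 hh1nn x1 hx1
        have hL2 : ∃ L2 : Polynomial ℝ, h1 = L2 * h2 ∧ (L2 = C b - X ∨ L2 = X + C b) := by
          rcases hform2 with h | h
          · exact ⟨C b - X, h, Or.inl rfl⟩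
          · exact ⟨X + C b, h, Or.inr rfl⟩
        obtain ⟨L2, hh1eq, hO2⟩ := hL2
        have hfM : f = (L1 * L2) * h2 := by rw [hf1eq, hh1eq]; ring
        obtain ⟨a0, c, hMrep, hc, ha0, hd0⟩ := pair_rep ha hb hO1 hO2
        obtain ⟨u0, u1, hh', hu0, hu1, hdu0, hdu1⟩ :=
          IH (d-2) (by omega) h2 (by omega) hh2nn
        have he0 : u0.natDegree ≤ d - 2 := by omega
        have he1 : u1 = 0 ∨ u1.natDegree + 2 ≤ d - 2 := by
          rcases hdu1 with h | h
          · exact Or.inl h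
          · exact Or.inr (by omega)
        obtain ⟨s0, s1, heq, hs0, hs1, hb0, hb1⟩ :=
          glue f (L1*L2) h2 a0 u0 u1 c (d-2) hfM hMrep hc ha0 hd0 hh' hu0 hu1 he0 he1
        exact ⟨s0, s1, heq, hs0, hs1, by omega, Or.inr (by omega)⟩
      · -- d odd, strip one factor
        have hd2 : d % 2 = 1 := Nat.odd_iff.mp hod
        obtain ⟨a0, c, hMrep, hc, ha0, hd0⟩ := lin_rep ha hO1
        obtain ⟨u0, u1, hh', hu0, hu1, hdu0, hdu1⟩ :=
          IH (d-1) (by omega) h1 (by omega) hh1nn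
        have he0 : u0.natDegree ≤ d - 1 := by omega
        have he1 : u1 = 0 ∨ u1.natDegree + 2 ≤ d - 1 := by
          rcases hdu1 with h | h
          · exact Or.inl h
          · exact Or.inr (by omega)
        obtain ⟨s0, s1, heq, hs0, hs1, hb0, hb1⟩ :=
          glue f L1 h1 a0 u0 u1 c (d-1) hf1eq hMrep hc ha0 hd0 hh' hu0 hu1 he0 he1
        exact ⟨s0, s1, heq, hs0, hs1, by omega, Or.inr (by omega)⟩

/-- Kuhlmann–Marshall–Schwartz: every real polynomial nonnegative on [-1,1]
is `s₀ + s₁·(1-t²)` with `s₀, s₁` sums of two squares, `deg s₀ ≤ deg f + 1`,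
`deg s₁ ≤ deg f - 1`. -/
theorem stmt0 (f : Polynomial ℝ) (hf : ∀ x ∈ Set.Icc (-1 : ℝ) 1, 0 ≤ f.eval x) :
    ∃ p q p' q' : Polynomial ℝ,
      f = (p ^ 2 + q ^ 2) + (p' ^ 2 + q' ^ 2) * (1 - X ^ 2) ∧
      (p ^ 2 + q ^ 2).natDegree ≤ f.natDegree + 1 ∧
      (p' ^ 2 + q' ^ 2).natDegree ≤ f.natDegree - 1 := by
  obtain ⟨s0, s1, heq, hs0, hs1, hb0, hb1⟩ := AUX f.natDegree f rfl hf
  obtain ⟨p, q, hpq⟩ := sum_two_sq s0 hs0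
  obtain ⟨p', q', hpq'⟩ := sum_two_sq s1 hs1
  refine ⟨p, q, p', q', by rw [heq, hpq, hpq'], ?_, ?_⟩
  · rw [← hpq]; omega
  · rw [← hpq']
    rcases hb1 with h | h
    · rw [h]; simp
    · omega
end

section
/- Let f ∈ ℝ[t] be non-negative on [-1,1], and let a, b ∈ ℝ satisfy a² ≤ f(-1) and b² ≤ f(1). Then there exists a polynomial s ∈ ℝ[t] with deg(s²) ≤ deg(f)+3, s(-1) = a, s(1) = b, and s(x)² ≤ f(x) for all x ∈ [-1,1]. -/
open Polynomial Filter

noncomputable section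

namespace Stmt1Aux


lemma nd_one_add_X : ((1 : ℝ[X]) + X).natDegree ≤ 1 := by
  refine (natDegree_add_le _ _).trans ?_
  simp

lemma nd_one_sub_X : ((1 : ℝ[X]) - X).natDegree ≤ 1 := by
  refine (natDegree_sub_le _ _).trans ?_
  simp

lemma comb2 {A B qa qb : ℝ[X]} {dA dB k ja jb j' K : ℕ}
    (hA : A.natDegree ≤ dA) (hB : B.natDegree ≤ dB)
    (ha : qa = 0 ∨ 2 * qa.natDegree + ja ≤ k) (hb : qb = 0 ∨ 2 * qb.natDegree + jb ≤ k)
    (h1 : 2 * dA + j' + k ≤ ja + K) (h2 : 2 * dB + j' + k ≤ jb + K) :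
    A * qa + B * qb = 0 ∨ 2 * (A * qa + B * qb).natDegree + j' ≤ K := by
  have bA : qa ≠ 0 → 2 * (A * qa).natDegree + j' ≤ K := by
    intro h; rcases ha with rfl | ha
    · exact absurd rfl h
    · have := natDegree_mul_le (p := A) (q := qa); omega
  have bB : qb ≠ 0 → 2 * (B * qb).natDegree + j' ≤ K := by
    intro h; rcases hb with rfl | hb
    · exact absurd rfl h
    · have := natDegree_mul_le (p := B) (q := qb); omega
  by_cases hqa : qa = 0
  · by_cases hqb : qb = 0
    · left; rw [hqa, hqb, mul_zero, mul_zero, add_zero]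
    · right; rw [hqa, mul_zero, zero_add]; exact bB hqb
  · by_cases hqb : qb = 0
    · right; rw [hqb, mul_zero, add_zero]; exact bA hqa
    · right
      have h5 := natDegree_add_le (A * qa) (B * qb)
      have h3 := bA hqa; have h4 := bB hqb
      rcases le_total ((A * qa).natDegree) ((B * qb).natDegree) with h6 | h6 <;> omega

lemma comb1 {A qa : ℝ[X]} {dA k ja j' K : ℕ}
    (hA : A.natDegree ≤ dA)
    (ha : qa = 0 ∨ 2 * qa.natDegree + ja ≤ k)
    (h1 : 2 * dA + j' + k ≤ ja + K) :
    A * qa = 0 ∨ 2 * (A * qa).natDegree + j' ≤ K := by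
  by_cases hqa : qa = 0
  · left; rw [hqa, mul_zero]
  · right
    rcases ha with rfl | ha
    · exact absurd rfl hqa
    · have := natDegree_mul_le (p := A) (q := qa); omega

/-- Even-type Lukács representation with degree bounds. -/
def EvenRep (f : ℝ[X]) : Prop :=
  ∃ p₁ p₂ q₁ q₂ : ℝ[X],
    f = p₁ ^ 2 + p₂ ^ 2 + (1 - X ^ 2) * (q₁ ^ 2 + q₂ ^ 2) ∧
    (p₁ = 0 ∨ 2 * p₁.natDegree + 0 ≤ f.natDegree) ∧
    (p₂ = 0 ∨ 2 * p₂.natDegree + 0 ≤ f.natDegree) ∧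
    (q₁ = 0 ∨ 2 * q₁.natDegree + 2 ≤ f.natDegree) ∧
    (q₂ = 0 ∨ 2 * q₂.natDegree + 2 ≤ f.natDegree)

/-- Odd-type Lukács representation with degree bounds. -/
def OddRep (f : ℝ[X]) : Prop :=
  ∃ u₁ u₂ v₁ v₂ : ℝ[X],
    f = (1 + X) * (u₁ ^ 2 + u₂ ^ 2) + (1 - X) * (v₁ ^ 2 + v₂ ^ 2) ∧
    (u₁ = 0 ∨ 2 * u₁.natDegree + 1 ≤ f.natDegree) ∧
    (u₂ = 0 ∨ 2 * u₂.natDegree + 1 ≤ f.natDegree) ∧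
    (v₁ = 0 ∨ 2 * v₁.natDegree + 1 ≤ f.natDegree) ∧
    (v₂ = 0 ∨ 2 * v₂.natDegree + 1 ≤ f.natDegree)

lemma sq_mul_even {f g : ℝ[X]} (r : ℝ) (hfg : f = (X - C r) ^ 2 * g)
    (hdeg : g.natDegree + 2 ≤ f.natDegree) (hg : EvenRep g) : EvenRep f := by
  obtain ⟨p₁, p₂, q₁, q₂, he, b1, b2, b3, b4⟩ := hg
  have hA : (X - C r).natDegree ≤ 1 := le_of_eq (natDegree_X_sub_C r)
  exact ⟨(X - C r) * p₁, (X - C r) * p₂, (X - C r) * q₁, (X - C r) * q₂,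
    by rw [hfg, he]; ring,
    comb1 hA b1 (by omega), comb1 hA b2 (by omega),
    comb1 hA b3 (by omega), comb1 hA b4 (by omega)⟩

lemma sq_mul_odd {f g : ℝ[X]} (r : ℝ) (hfg : f = (X - C r) ^ 2 * g)
    (hdeg : g.natDegree + 2 ≤ f.natDegree) (hg : OddRep g) : OddRep f := by
  obtain ⟨u₁, u₂, v₁, v₂, he, b1, b2, b3, b4⟩ := hg
  have hA : (X - C r).natDegree ≤ 1 := le_of_eq (natDegree_X_sub_C r)
  exact ⟨(X - C r) * u₁, (X - C r) * u₂, (X - C r) * v₁, (X - C r) * v₂,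
    by rw [hfg, he]; ring,
    comb1 hA b1 (by omega), comb1 hA b2 (by omega),
    comb1 hA b3 (by omega), comb1 hA b4 (by omega)⟩

lemma quad_mul_even {f g : ℝ[X]} (m e : ℝ) (hfg : f = ((X - C m) ^ 2 + C e ^ 2) * g)
    (hdeg : g.natDegree + 2 ≤ f.natDegree) (hg : EvenRep g) : EvenRep f := by
  obtain ⟨p₁, p₂, q₁, q₂, he, b1, b2, b3, b4⟩ := hg
  have hA : (X - C m).natDegree ≤ 1 := le_of_eq (natDegree_X_sub_C m)
  have hB : ∀ t : ℝ, (C t : ℝ[X]).natDegree ≤ 0 := fun t => le_of_eq (natDegree_C t)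
  exact ⟨(X - C m) * p₁ + C e * p₂, (X - C m) * p₂ + C (-e) * p₁,
    (X - C m) * q₁ + C e * q₂, (X - C m) * q₂ + C (-e) * q₁,
    by rw [hfg, he]; simp only [map_neg]; ring,
    comb2 hA (hB e) b1 b2 (by omega) (by omega),
    comb2 hA (hB (-e)) b2 b1 (by omega) (by omega),
    comb2 hA (hB e) b3 b4 (by omega) (by omega),
    comb2 hA (hB (-e)) b4 b3 (by omega) (by omega)⟩

lemma quad_mul_odd {f g : ℝ[X]} (m e : ℝ) (hfg : f = ((X - C m) ^ 2 + C e ^ 2) * g)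
    (hdeg : g.natDegree + 2 ≤ f.natDegree) (hg : OddRep g) : OddRep f := by
  obtain ⟨u₁, u₂, v₁, v₂, he, b1, b2, b3, b4⟩ := hg
  have hA : (X - C m).natDegree ≤ 1 := le_of_eq (natDegree_X_sub_C m)
  have hB : ∀ t : ℝ, (C t : ℝ[X]).natDegree ≤ 0 := fun t => le_of_eq (natDegree_C t)
  exact ⟨(X - C m) * u₁ + C e * u₂, (X - C m) * u₂ + C (-e) * u₁,
    (X - C m) * v₁ + C e * v₂, (X - C m) * v₂ + C (-e) * v₁,
    by rw [hfg, he]; simp only [map_neg]; ring,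
    comb2 hA (hB e) b1 b2 (by omega) (by omega),
    comb2 hA (hB (-e)) b2 b1 (by omega) (by omega),
    comb2 hA (hB e) b3 b4 (by omega) (by omega),
    comb2 hA (hB (-e)) b4 b3 (by omega) (by omega)⟩

lemma O_mul_even {f g : ℝ[X]} (c d : ℝ)
    (hfg : f = ((1 + X) * C c ^ 2 + (1 - X) * C d ^ 2) * g)
    (hdeg : g.natDegree + 1 ≤ f.natDegree) (hg : EvenRep g) : OddRep f := by
  obtain ⟨p₁, p₂, q₁, q₂, he, b1, b2, b3, b4⟩ := hg
  have hB : ∀ t : ℝ, ((1 - X) * C t : ℝ[X]).natDegree ≤ 1 :=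
    fun t => (natDegree_mul_le).trans (by simpa [natDegree_C] using nd_one_sub_X)
  have hB' : ∀ t : ℝ, ((1 + X) * C t : ℝ[X]).natDegree ≤ 1 :=
    fun t => (natDegree_mul_le).trans (by simpa [natDegree_C] using nd_one_add_X)
  have hC : ∀ t : ℝ, (C t : ℝ[X]).natDegree ≤ 0 := fun t => le_of_eq (natDegree_C t)
  exact ⟨C c * p₁ + ((1 - X) * C d) * q₁, C c * p₂ + ((1 - X) * C d) * q₂,
    C d * p₁ + ((1 + X) * C (-c)) * q₁, C d * p₂ + ((1 + X) * C (-c)) * q₂,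
    by rw [hfg, he]; simp only [map_neg]; ring,
    comb2 (hC c) (hB d) b1 b3 (by omega) (by omega),
    comb2 (hC c) (hB d) b2 b4 (by omega) (by omega),
    comb2 (hC d) (hB' (-c)) b1 b3 (by omega) (by omega),
    comb2 (hC d) (hB' (-c)) b2 b4 (by omega) (by omega)⟩

lemma O_mul_odd {f g : ℝ[X]} (c d : ℝ)
    (hfg : f = ((1 + X) * C c ^ 2 + (1 - X) * C d ^ 2) * g)
    (hdeg : g.natDegree + 1 ≤ f.natDegree) (hg : OddRep g) : EvenRep f := by
  obtain ⟨u₁, u₂, v₁, v₂, he, b1, b2, b3, b4⟩ := hg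
  have hB : ∀ t : ℝ, ((1 - X) * C t : ℝ[X]).natDegree ≤ 1 :=
    fun t => (natDegree_mul_le).trans (by simpa [natDegree_C] using nd_one_sub_X)
  have hB' : ∀ t : ℝ, ((1 + X) * C t : ℝ[X]).natDegree ≤ 1 :=
    fun t => (natDegree_mul_le).trans (by simpa [natDegree_C] using nd_one_add_X)
  have hC : ∀ t : ℝ, (C t : ℝ[X]).natDegree ≤ 0 := fun t => le_of_eq (natDegree_C t)
  exact ⟨((1 + X) * C c) * u₁ + ((1 - X) * C d) * v₁,
    ((1 + X) * C c) * u₂ + ((1 - X) * C d) * v₂,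
    C c * v₁ + C (-d) * u₁, C c * v₂ + C (-d) * u₂,
    by rw [hfg, he]; simp only [map_neg]; ring,
    comb2 (hB' c) (hB d) b1 b3 (by omega) (by omega),
    comb2 (hB' c) (hB d) b2 b4 (by omega) (by omega),
    comb2 (hC c) (hC (-d)) b3 b1 (by omega) (by omega),
    comb2 (hC c) (hC (-d)) b4 b2 (by omega) (by omega)⟩



lemma tendsto_aux (r c : ℝ) :
    Tendsto (fun n : ℕ => r + c / (n + 2)) atTop (nhds r) := by
  have h1 : Tendsto (fun n : ℕ => ((n : ℝ) + 2)) atTop atTop :=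
    tendsto_atTop_add_const_right _ 2 tendsto_natCast_atTop_atTop
  have h2 : Tendsto (fun n : ℕ => c / ((n : ℝ) + 2)) atTop (nhds 0) :=
    Tendsto.div_atTop tendsto_const_nhds h1
  simpa using tendsto_const_nhds.add h2

lemma nonneg_extend {g : ℝ[X]} {r : ℝ}
    (h : ∀ x ∈ Set.Icc (-1 : ℝ) 1, x ≠ r → 0 ≤ g.eval x) :
    ∀ x ∈ Set.Icc (-1 : ℝ) 1, 0 ≤ g.eval x := by
  intro x hx
  rcases eq_or_ne x r with rfl | hxr
  · -- x = r
    rcases lt_or_ge x 1 with hlt | hge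
    · -- approach from the right
      have hseq := tendsto_aux x (1 - x)
      have hcont : Tendsto (fun n : ℕ => g.eval (x + (1 - x) / (n + 2))) atTop (nhds (g.eval x)) :=
        ((g.continuous.tendsto x).comp hseq)
      refine ge_of_tendsto hcont (Filter.Eventually.of_forall fun n => ?_)
      have hn2 : (0:ℝ) < (n : ℝ) + 2 := by positivity
      have hpos : 0 < (1 - x) / ((n : ℝ) + 2) := by
        apply div_pos (by linarith) hn2
      have hle : (1 - x) / ((n : ℝ) + 2) ≤ 1 - x := by
        apply div_le_self (by linarith) (by linarith)
      refine h _ ⟨by linarith [hx.1], by linarith⟩ (by intro hcon; nlinarith)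
    · -- x = 1, approach from the left
      have hx1 : x = 1 := le_antisymm hx.2 hge
      have hseq := tendsto_aux x (-2)
      have hcont : Tendsto (fun n : ℕ => g.eval (x + (-2) / (n + 2))) atTop (nhds (g.eval x)) :=
        ((g.continuous.tendsto x).comp hseq)
      refine ge_of_tendsto hcont (Filter.Eventually.of_forall fun n => ?_)
      have hn2 : (0:ℝ) < (n : ℝ) + 2 := by positivity
      have hneg : (-2) / ((n : ℝ) + 2) < 0 := by
        apply div_neg_of_neg_of_pos (by norm_num) hn2
      have hge2 : (-1 : ℝ) ≤ (-2) / ((n : ℝ) + 2) := by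
        rw [le_div_iff₀ hn2]
        linarith
      refine h _ ⟨by linarith [hx.1], by linarith⟩ (by intro hcon; nlinarith)
  · exact h x hx hxr

lemma exists_double_root {f : ℝ[X]} {r : ℝ}
    (hf : ∀ x ∈ Set.Icc (-1 : ℝ) 1, 0 ≤ f.eval x)
    (hr : r ∈ Set.Ioo (-1 : ℝ) 1) (h0 : f.eval r = 0) :
    ∃ h : ℝ[X], f = (X - C r) ^ 2 * h := by
  obtain ⟨g, hg⟩ := dvd_iff_isRoot.mpr (show f.IsRoot r from h0)
  have hmin : IsLocalMin (fun x => f.eval x) r := by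
    have hmem : Set.Ioo (-1 : ℝ) 1 ∈ nhds r := isOpen_Ioo.mem_nhds hr
    refine Filter.eventually_of_mem hmem fun y hy => ?_
    simp only [h0]
    exact hf y ⟨le_of_lt hy.1, le_of_lt hy.2⟩
  have hderiv : f.derivative.eval r = 0 := by
    have h1 := hmin.deriv_eq_zero
    rwa [Polynomial.deriv (p := f)] at h1
  have hgr : g.eval r = 0 := by
    have hd : f.derivative = g + (X - C r) * g.derivative := by
      rw [hg, derivative_mul]
      simp
    have := hd ▸ hderiv
    simpa using this
  obtain ⟨h, hh⟩ := dvd_iff_isRoot.mpr (show g.IsRoot r from hgr)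
  exact ⟨h, by rw [hg, hh]; ring⟩


lemma rep_zero : EvenRep 0 :=
  ⟨0, 0, 0, 0, by ring, Or.inl rfl, Or.inl rfl, Or.inl rfl, Or.inl rfl⟩

lemma rep_C (c : ℝ) (hc : 0 ≤ c) : EvenRep (C c) := by
  refine ⟨C (Real.sqrt c), 0, 0, 0, ?_, Or.inr (by simp [natDegree_C]), Or.inl rfl,
    Or.inl rfl, Or.inl rfl⟩
  rw [← map_pow, Real.sq_sqrt hc]; ring

lemma O_form (a b : ℝ) :
    ((1:ℝ[X]) + X) * C a + (1 - X) * C b = C (a + b) + C (a - b) * X := by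
  rw [map_add, map_sub]; ring

lemma rep_main (D : ℕ) : ∀ f : ℝ[X], f.natDegree ≤ D →
    (∀ x ∈ Set.Icc (-1 : ℝ) 1, 0 ≤ f.eval x) → EvenRep f ∨ OddRep f := by
  induction D using Nat.strong_induction_on with
  | _ D IH =>
  intro f hD hf
  by_cases hf0 : f = 0
  · exact Or.inl (hf0 ▸ rep_zero)
  by_cases hd0 : f.natDegree = 0
  · obtain ⟨c, rfl⟩ := natDegree_eq_zero.mp hd0
    have hc : 0 ≤ c := by simpa using hf 0 (by norm_num)
    exact Or.inl (rep_C c hc)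
  have hdpos : 0 < f.natDegree := Nat.pos_of_ne_zero hd0
  have hmap0 : 0 < (f.map (algebraMap ℝ ℂ)).degree := by
    rw [degree_map_eq_of_injective (algebraMap ℝ ℂ).injective]
    exact natDegree_pos_iff_degree_pos.mp hdpos
  obtain ⟨z, hz⟩ := Complex.exists_root hmap0
  by_cases him : z.im = 0
  · -- real root r := z.re
    have hroot : f.eval z.re = 0 := by
      have hz' : eval₂ (algebraMap ℝ ℂ) z f = 0 := by rwa [IsRoot, eval_map] at hz
      have hz2 : z = (algebraMap ℝ ℂ) z.re := by
        rw [Complex.coe_algebraMap]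
        apply Complex.ext <;> simp [him]
      have h2 : (algebraMap ℝ ℂ) (f.eval z.re) = 0 := by
        rw [← Polynomial.eval₂_at_apply (algebraMap ℝ ℂ) z.re, ← hz2]
        exact hz'
      exact (algebraMap ℝ ℂ).injective (h2.trans (map_zero _).symm)
    set r := z.re with hrdef
    rcases le_or_gt 1 r with hr1 | hr1
    · -- r ≥ 1 : f = (C r - X) * g with g nonneg
      obtain ⟨g₀, hg₀⟩ := dvd_iff_isRoot.mpr (show f.IsRoot r from hroot)
      have hfg : f = (C r - X) * (-g₀) := by rw [hg₀]; ring
      set g : ℝ[X] := -g₀ with hgdef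
      have hgne : g ≠ 0 := by intro h; rw [h, mul_zero] at hfg; exact hf0 hfg
      have hnd1 : (C r - X : ℝ[X]).natDegree = 1 := by
        rw [show (C r - X : ℝ[X]) = -(X - C r) from by ring, natDegree_neg, natDegree_X_sub_C]
      have hCrX : (C r - X : ℝ[X]) ≠ 0 := fun h => by simp [h] at hnd1
      have hndf : f.natDegree = 1 + g.natDegree := by
        rw [hfg, natDegree_mul hCrX hgne, hnd1]
      have hgnn : ∀ x ∈ Set.Icc (-1 : ℝ) 1, 0 ≤ g.eval x := by
        apply nonneg_extend (r := r)
        intro x hx hxr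
        have h1 := hf x hx
        rw [hfg, eval_mul, eval_sub, eval_C, eval_X] at h1
        have h2 : 0 < r - x := by
          rcases lt_or_eq_of_le (hx.2.trans hr1) with h | h
          · linarith
          · exact absurd h hxr
        by_contra hcon; push_neg at hcon; nlinarith
      have hIH := IH g.natDegree (by omega) g le_rfl hgnn
      set c := Real.sqrt ((r - 1) / 2) with hcdef
      set d := Real.sqrt ((r + 1) / 2) with hddef
      have hc2 : c ^ 2 = (r - 1) / 2 := Real.sq_sqrt (by linarith)
      have hd2 : d ^ 2 = (r + 1) / 2 := Real.sq_sqrt (by linarith)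
      have hW : (C r - X : ℝ[X]) = (1 + X) * C c ^ 2 + (1 - X) * C d ^ 2 := by
        rw [← map_pow, ← map_pow, hc2, hd2, O_form]
        rw [show (r - 1) / 2 + (r + 1) / 2 = r from by ring,
          show (r - 1) / 2 - (r + 1) / 2 = (-1 : ℝ) from by ring]
        simp only [map_neg, map_one]
        ring
      have hfg' : f = ((1 + X) * C c ^ 2 + (1 - X) * C d ^ 2) * g := by rw [hfg, hW]
      rcases hIH with hE | hO
      · exact Or.inr (O_mul_even c d hfg' (by omega) hE)
      · exact Or.inl (O_mul_odd c d hfg' (by omega) hO)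
    rcases le_or_gt r (-1) with hr2 | hr2
    · -- r ≤ -1 : f = (X - C r) * g
      obtain ⟨g, hfg⟩ := dvd_iff_isRoot.mpr (show f.IsRoot r from hroot)
      have hgne : g ≠ 0 := by intro h; rw [h, mul_zero] at hfg; exact hf0 hfg
      have hnd1 : (X - C r : ℝ[X]).natDegree = 1 := natDegree_X_sub_C r
      have hndf : f.natDegree = 1 + g.natDegree := by
        rw [hfg, natDegree_mul (X_sub_C_ne_zero r) hgne, hnd1]
      have hgnn : ∀ x ∈ Set.Icc (-1 : ℝ) 1, 0 ≤ g.eval x := by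
        apply nonneg_extend (r := r)
        intro x hx hxr
        have h1 := hf x hx
        rw [hfg, eval_mul, eval_sub, eval_C, eval_X] at h1
        have h2 : 0 < x - r := by
          rcases lt_or_eq_of_le (hr2.trans hx.1) with h | h
          · linarith
          · exact absurd h.symm hxr
        by_contra hcon; push_neg at hcon; nlinarith
      have hIH := IH g.natDegree (by omega) g le_rfl hgnn
      set c := Real.sqrt ((1 - r) / 2) with hcdef
      set d := Real.sqrt ((-1 - r) / 2) with hddef
      have hc2 : c ^ 2 = (1 - r) / 2 := Real.sq_sqrt (by linarith)
      have hd2 : d ^ 2 = (-1 - r) / 2 := Real.sq_sqrt (by linarith)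
      have hW : (X - C r : ℝ[X]) = (1 + X) * C c ^ 2 + (1 - X) * C d ^ 2 := by
        rw [← map_pow, ← map_pow, hc2, hd2, O_form]
        rw [show (1 - r) / 2 + (-1 - r) / 2 = -r from by ring,
          show (1 - r) / 2 - (-1 - r) / 2 = (1 : ℝ) from by ring]
        simp only [map_neg, map_one]
        ring
      have hfg' : f = ((1 + X) * C c ^ 2 + (1 - X) * C d ^ 2) * g := by rw [hfg, hW]
      rcases hIH with hE | hO
      · exact Or.inr (O_mul_even c d hfg' (by omega) hE)
      · exact Or.inl (O_mul_odd c d hfg' (by omega) hO)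
    · -- -1 < r < 1 : double root
      obtain ⟨h, hfh⟩ := exists_double_root hf ⟨hr2, hr1⟩ hroot
      have hhne : h ≠ 0 := by intro hc; rw [hc, mul_zero] at hfh; exact hf0 hfh
      have hnd2 : (((X : ℝ[X]) - C r) ^ 2).natDegree = 2 := by
        rw [natDegree_pow, natDegree_X_sub_C]
      have hndf : f.natDegree = 2 + h.natDegree := by
        rw [hfh, natDegree_mul (pow_ne_zero 2 (X_sub_C_ne_zero r)) hhne, hnd2]
      have hhnn : ∀ x ∈ Set.Icc (-1 : ℝ) 1, 0 ≤ h.eval x := by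
        apply nonneg_extend (r := r)
        intro x hx hxr
        have h1 := hf x hx
        rw [hfh, eval_mul, eval_pow, eval_sub, eval_C, eval_X] at h1
        have h2 : 0 < (x - r) ^ 2 := by
          have : x - r ≠ 0 := sub_ne_zero.mpr hxr
          positivity
        by_contra hcon; push_neg at hcon; nlinarith
      have hIH := IH h.natDegree (by omega) h le_rfl hhnn
      rcases hIH with hE | hO
      · exact Or.inl (sq_mul_even r hfh (by omega) hE)
      · exact Or.inr (sq_mul_odd r hfh (by omega) hO)
  · -- non-real root: quadratic factor
    have haeval : aeval z f = 0 := by rwa [aeval_def, ← eval_map]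
    obtain ⟨h, hQh⟩ := f.quadratic_dvd_of_aeval_eq_zero_im_ne_zero haeval him
    have hnormsq : ‖z‖ ^ 2 = z.re ^ 2 + z.im ^ 2 := by
      rw [Complex.sq_norm, Complex.normSq_apply]; ring
    have hndQ : (X ^ 2 - C (2 * z.re) * X + C (‖z‖ ^ 2) : ℝ[X]).natDegree = 2 := by
      compute_degree!
    have hQne : (X ^ 2 - C (2 * z.re) * X + C (‖z‖ ^ 2) : ℝ[X]) ≠ 0 := by
      intro hc
      rw [hc] at hndQ
      simp at hndQ
    have hhne : h ≠ 0 := by intro hc; rw [hc, mul_zero] at hQh; exact hf0 hQh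
    have hndf : f.natDegree = 2 + h.natDegree := by
      rw [hQh, natDegree_mul hQne hhne, hndQ]
    have hQform : (X ^ 2 - C (2 * z.re) * X + C (‖z‖ ^ 2) : ℝ[X])
        = (X - C z.re) ^ 2 + C z.im ^ 2 := by
      rw [hnormsq]
      simp only [map_add, map_pow, map_mul, map_ofNat]
      ring
    have hQpos : ∀ x : ℝ, 0 < ((X - C z.re) ^ 2 + C z.im ^ 2 : ℝ[X]).eval x := by
      intro x
      have h1 : 0 < z.im ^ 2 := by positivity
      simp only [eval_add, eval_pow, eval_sub, eval_X, eval_C]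
      nlinarith [sq_nonneg (x - z.re)]
    have hfh : f = ((X - C z.re) ^ 2 + C z.im ^ 2) * h := by rw [hQh, hQform]
    have hhnn : ∀ x ∈ Set.Icc (-1 : ℝ) 1, 0 ≤ h.eval x := by
      intro x hx
      have h1 := hf x hx
      rw [hfh, eval_mul] at h1
      have h2 := hQpos x
      by_contra hcon; push_neg at hcon; nlinarith
    have hIH := IH h.natDegree (by omega) h le_rfl hhnn
    rcases hIH with hE | hO
    · exact Or.inl (quad_mul_even z.re z.im hfh (by omega) hE)
    · exact Or.inr (quad_mul_odd z.re z.im hfh (by omega) hO)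


/-- endpoint scaling factor -/
lemma tfact {w F aa P1 P2 : ℝ} (hw : 0 < w) (hF : 0 ≤ F) (ha : aa ^ 2 ≤ F)
    (hsum : F = w * (P1 ^ 2 + P2 ^ 2)) :
    ∃ t : ℝ, w * ((t * P1) ^ 2 + (t * P2) ^ 2) ≤ 1 ∧ w * (t * P1 * P1 + t * P2 * P2) = aa := by
  by_cases h : F = 0
  · refine ⟨0, by norm_num, ?_⟩
    have h1 : aa = 0 := by nlinarith [sq_nonneg aa]
    simp [h1]
  · have hpos : 0 < F := lt_of_le_of_ne hF (Ne.symm h)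
    refine ⟨aa / F, ?_, ?_⟩
    · have e0 : w * ((aa / F * P1) ^ 2 + (aa / F * P2) ^ 2)
          = aa ^ 2 * (w * (P1 ^ 2 + P2 ^ 2)) / F ^ 2 := by
        field_simp
      have e1 : w * ((aa / F * P1) ^ 2 + (aa / F * P2) ^ 2) = aa ^ 2 / F := by
        rw [e0, ← hsum]
        field_simp
      rw [e1, div_le_one hpos]; exact ha
    · have e2 : w * (aa / F * P1 * P1 + aa / F * P2 * P2) = aa * (w * (P1 ^ 2 + P2 ^ 2)) / F := by
        field_simp
      rw [e2, ← hsum, mul_div_assoc, div_self h, mul_one]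

lemma conv_bound {x α₁ α₂ β₁ β₂ : ℝ} (hx1 : -1 ≤ x) (hx2 : x ≤ 1)
    (hα : α₁ ^ 2 + α₂ ^ 2 ≤ 1) (hβ : β₁ ^ 2 + β₂ ^ 2 ≤ 1) :
    ((1 - x) / 2 * α₁ + (1 + x) / 2 * β₁) ^ 2 + ((1 - x) / 2 * α₂ + (1 + x) / 2 * β₂) ^ 2 ≤ 1 := by
  nlinarith [mul_nonneg (mul_nonneg (by linarith : (0:ℝ) ≤ (1 - x) / 2)
      (by linarith : (0:ℝ) ≤ (1 + x) / 2)) (sq_nonneg (α₁ - β₁)),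
    mul_nonneg (mul_nonneg (by linarith : (0:ℝ) ≤ (1 - x) / 2)
      (by linarith : (0:ℝ) ≤ (1 + x) / 2)) (sq_nonneg (α₂ - β₂)),
    mul_nonneg (by linarith : (0:ℝ) ≤ (1 - x) / 2) (by linarith : 0 ≤ 1 - (α₁ ^ 2 + α₂ ^ 2)),
    mul_nonneg (by linarith : (0:ℝ) ≤ (1 + x) / 2) (by linarith : 0 ≤ 1 - (β₁ ^ 2 + β₂ ^ 2))]

lemma even_pointwise {L1 L2 P1 P2 Qs : ℝ} (hL : L1 ^ 2 + L2 ^ 2 ≤ 1) (hQ : 0 ≤ Qs) :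
    (L1 * P1 + L2 * P2) ^ 2 ≤ P1 ^ 2 + P2 ^ 2 + Qs := by
  nlinarith [sq_nonneg (L1 * P2 - L2 * P1),
    mul_nonneg (by linarith : 0 ≤ 1 - (L1 ^ 2 + L2 ^ 2))
      (by positivity : (0:ℝ) ≤ P1 ^ 2 + P2 ^ 2)]

lemma odd_pointwise {x g dd A B : ℝ} (hx1 : -1 ≤ x) (hx2 : x ≤ 1)
    (hA : 0 ≤ A) (hB : 0 ≤ B) (hg : 2 * g ^ 2 ≤ A) (hd : 2 * dd ^ 2 ≤ B) :
    ((1 + x) ^ 2 / 2 * g + (1 - x) ^ 2 / 2 * dd) ^ 2 ≤ (1 + x) * A + (1 - x) * B := by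
  have key : (1 + 3 * x ^ 2) / 4 * (2 * (1 + x) * g ^ 2 + 2 * (1 - x) * dd ^ 2)
      - ((1 + x) ^ 2 / 2 * g + (1 - x) ^ 2 / 2 * dd) ^ 2
      = (1 - x) * (1 + x) * ((1 - x) * g - (1 + x) * dd) ^ 2 / 4 := by ring
  have hM : 0 ≤ (1 + x) * A + (1 - x) * B - (2 * (1 + x) * g ^ 2 + 2 * (1 - x) * dd ^ 2) := by
    nlinarith [mul_nonneg (by linarith : (0:ℝ) ≤ 1 + x) (by linarith : 0 ≤ A - 2 * g ^ 2),
      mul_nonneg (by linarith : (0:ℝ) ≤ 1 - x) (by linarith : 0 ≤ B - 2 * dd ^ 2)]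
  have hc0 : 0 ≤ (1 + 3 * x ^ 2) / 4 := by positivity
  have hF : 0 ≤ (1 + x) * A + (1 - x) * B := by
    have h1 := mul_nonneg (by linarith : (0:ℝ) ≤ 1 + x) hA
    have h2 := mul_nonneg (by linarith : (0:ℝ) ≤ 1 - x) hB
    linarith
  nlinarith [key,
    mul_nonneg (mul_nonneg (by linarith : (0:ℝ) ≤ 1 - x) (by linarith : (0:ℝ) ≤ 1 + x))
      (sq_nonneg ((1 - x) * g - (1 + x) * dd)),
    mul_nonneg hc0 hM,
    mul_nonneg (by nlinarith : 0 ≤ 1 - (1 + 3 * x ^ 2) / 4) hF]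

lemma lin_nd (u v : ℝ) : (C u + C v * X : ℝ[X]).natDegree ≤ 1 := by
  refine (natDegree_add_le _ _).trans ?_
  simp only [natDegree_C, max_le_iff]
  constructor
  · omega
  · exact (natDegree_mul_le).trans (by simp [natDegree_C])

lemma final_even {f : ℝ[X]} (hf : ∀ x ∈ Set.Icc (-1 : ℝ) 1, 0 ≤ f.eval x) {a b : ℝ}
    (ha : a ^ 2 ≤ f.eval (-1)) (hb : b ^ 2 ≤ f.eval 1) (hE : EvenRep f) :
    ∃ s : ℝ[X], (s ^ 2).natDegree ≤ f.natDegree + 3 ∧ s.eval (-1) = a ∧ s.eval 1 = b ∧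
      ∀ x ∈ Set.Icc (-1 : ℝ) 1, (s.eval x) ^ 2 ≤ f.eval x := by
  obtain ⟨p₁, p₂, q₁, q₂, he, b1, b2, b3, b4⟩ := hE
  have hFm : f.eval (-1) = 1 * ((p₁.eval (-1)) ^ 2 + (p₂.eval (-1)) ^ 2) := by
    rw [he]; simp only [eval_add, eval_mul, eval_pow, eval_sub, eval_one, eval_X]; ring
  have hFp : f.eval 1 = 1 * ((p₁.eval 1) ^ 2 + (p₂.eval 1) ^ 2) := by
    rw [he]; simp only [eval_add, eval_mul, eval_pow, eval_sub, eval_one, eval_X]; ring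
  obtain ⟨tm, htm1, htm2⟩ := tfact one_pos (hf (-1) (by norm_num)) ha hFm
  obtain ⟨tp, htp1, htp2⟩ := tfact one_pos (hf 1 (by norm_num)) hb hFp
  set am := tm * p₁.eval (-1) with ham
  set am2 := tm * p₂.eval (-1) with ham2
  set bp := tp * p₁.eval 1 with hbp
  set bp2 := tp * p₂.eval 1 with hbp2
  set l₁ : ℝ[X] := C ((bp + am) / 2) + C ((bp - am) / 2) * X with hl₁
  set l₂ : ℝ[X] := C ((bp2 + am2) / 2) + C ((bp2 - am2) / 2) * X with hl₂
  refine ⟨l₁ * p₁ + l₂ * p₂, ?_, ?_, ?_, ?_⟩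
  · -- degree
    rw [natDegree_pow]
    have hl1d : l₁.natDegree ≤ 1 := lin_nd _ _
    have hl2d : l₂.natDegree ≤ 1 := lin_nd _ _
    have t1 : 2 * (l₁ * p₁).natDegree ≤ f.natDegree + 2 := by
      rcases b1 with h | h
      · simp [h]
      · have := natDegree_mul_le (p := l₁) (q := p₁); omega
    have t2 : 2 * (l₂ * p₂).natDegree ≤ f.natDegree + 2 := by
      rcases b2 with h | h
      · simp [h]
      · have := natDegree_mul_le (p := l₂) (q := p₂); omega
    have h5 := natDegree_add_le (l₁ * p₁) (l₂ * p₂)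
    rcases le_total ((l₁ * p₁).natDegree) ((l₂ * p₂).natDegree) with h6 | h6 <;> omega
  · -- value at -1
    simp only [hl₁, hl₂, eval_add, eval_mul, eval_C, eval_X]
    linear_combination htm2
  · -- value at 1
    simp only [hl₁, hl₂, eval_add, eval_mul, eval_C, eval_X]
    linear_combination htp2
  · -- pointwise
    intro x hx
    have hev : f.eval x = (p₁.eval x) ^ 2 + (p₂.eval x) ^ 2
        + (1 - x ^ 2) * ((q₁.eval x) ^ 2 + (q₂.eval x) ^ 2) := by
      rw [he]; simp only [eval_add, eval_mul, eval_pow, eval_sub, eval_one, eval_X]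
    have hL1 : l₁.eval x = (1 - x) / 2 * am + (1 + x) / 2 * bp := by
      simp only [hl₁, eval_add, eval_mul, eval_C, eval_X]; ring
    have hL2 : l₂.eval x = (1 - x) / 2 * am2 + (1 + x) / 2 * bp2 := by
      simp only [hl₂, eval_add, eval_mul, eval_C, eval_X]; ring
    have hα : am ^ 2 + am2 ^ 2 ≤ 1 := by linarith [htm1]
    have hβ : bp ^ 2 + bp2 ^ 2 ≤ 1 := by linarith [htp1]
    have hLs : (l₁.eval x) ^ 2 + (l₂.eval x) ^ 2 ≤ 1 := by
      rw [hL1, hL2]; exact conv_bound hx.1 hx.2 hα hβ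
    have hQ : 0 ≤ (1 - x ^ 2) * ((q₁.eval x) ^ 2 + (q₂.eval x) ^ 2) := by
      apply mul_nonneg
      · nlinarith [hx.1, hx.2]
      · positivity
    rw [hev, eval_add, eval_mul, eval_mul]
    exact even_pointwise hLs hQ

lemma cs_half {g1 g2 A1 A2 : ℝ} (h : 2 * (g1 ^ 2 + g2 ^ 2) ≤ 1) :
    2 * (g1 * A1 + g2 * A2) ^ 2 ≤ A1 ^ 2 + A2 ^ 2 := by
  nlinarith [sq_nonneg (g1 * A2 - g2 * A1),
    mul_nonneg (by linarith : 0 ≤ 1 - 2 * (g1 ^ 2 + g2 ^ 2))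
      (by positivity : (0:ℝ) ≤ A1 ^ 2 + A2 ^ 2)]

lemma final_odd {f : ℝ[X]} (hf : ∀ x ∈ Set.Icc (-1 : ℝ) 1, 0 ≤ f.eval x) {a b : ℝ}
    (ha : a ^ 2 ≤ f.eval (-1)) (hb : b ^ 2 ≤ f.eval 1) (hO : OddRep f) :
    ∃ s : ℝ[X], (s ^ 2).natDegree ≤ f.natDegree + 3 ∧ s.eval (-1) = a ∧ s.eval 1 = b ∧
      ∀ x ∈ Set.Icc (-1 : ℝ) 1, (s.eval x) ^ 2 ≤ f.eval x := by
  obtain ⟨u₁, u₂, v₁, v₂, he, b1, b2, b3, b4⟩ := hO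
  have hFp : f.eval 1 = 2 * ((u₁.eval 1) ^ 2 + (u₂.eval 1) ^ 2) := by
    rw [he]; simp only [eval_add, eval_mul, eval_pow, eval_sub, eval_one, eval_X]; ring
  have hFm : f.eval (-1) = 2 * ((v₁.eval (-1)) ^ 2 + (v₂.eval (-1)) ^ 2) := by
    rw [he]; simp only [eval_add, eval_mul, eval_pow, eval_sub, eval_one, eval_X]; ring
  obtain ⟨tp, htp1, htp2⟩ := tfact two_pos (hf 1 (by norm_num)) hb hFp
  obtain ⟨tm, htm1, htm2⟩ := tfact two_pos (hf (-1) (by norm_num)) ha hFm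
  set sP : ℝ[X] := C (tp * u₁.eval 1 / 2) * ((1 + X) ^ 2 * u₁)
      + C (tp * u₂.eval 1 / 2) * ((1 + X) ^ 2 * u₂)
      + C (tm * v₁.eval (-1) / 2) * ((1 - X) ^ 2 * v₁)
      + C (tm * v₂.eval (-1) / 2) * ((1 - X) ^ 2 * v₂) with hsP
  have hsEval : ∀ x : ℝ, sP.eval x
      = tp * u₁.eval 1 / 2 * ((1 + x) ^ 2 * u₁.eval x)
        + tp * u₂.eval 1 / 2 * ((1 + x) ^ 2 * u₂.eval x)
        + tm * v₁.eval (-1) / 2 * ((1 - x) ^ 2 * v₁.eval x)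
        + tm * v₂.eval (-1) / 2 * ((1 - x) ^ 2 * v₂.eval x) := by
    intro x
    simp only [hsP, eval_add, eval_mul, eval_pow, eval_sub, eval_C, eval_X, eval_one]
  refine ⟨sP, ?_, ?_, ?_, ?_⟩
  · -- degree
    rw [natDegree_pow]
    have hw1 : (((1:ℝ[X]) + X) ^ 2).natDegree ≤ 2 := by
      rw [natDegree_pow]; have := nd_one_add_X; omega
    have hw2 : (((1:ℝ[X]) - X) ^ 2).natDegree ≤ 2 := by
      rw [natDegree_pow]; have := nd_one_sub_X; omega
    have key : ∀ (c : ℝ) (w u : ℝ[X]), w.natDegree ≤ 2 →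
        (u = 0 ∨ 2 * u.natDegree + 1 ≤ f.natDegree) →
        2 * (C c * (w * u)).natDegree ≤ f.natDegree + 3 := by
      intro c w u hwd hu
      rcases hu with rfl | hu
      · simp
      · have h1 := natDegree_C_mul_le c (w * u)
        have h2 := natDegree_mul_le (p := w) (q := u)
        omega
    have t1 := key (tp * u₁.eval 1 / 2) _ _ hw1 b1
    have t2 := key (tp * u₂.eval 1 / 2) _ _ hw1 b2
    have t3 := key (tm * v₁.eval (-1) / 2) _ _ hw2 b3
    have t4 := key (tm * v₂.eval (-1) / 2) _ _ hw2 b4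
    have s1 := natDegree_add_le (C (tp * u₁.eval 1 / 2) * ((1 + X) ^ 2 * u₁))
      (C (tp * u₂.eval 1 / 2) * ((1 + X) ^ 2 * u₂))
    have s2 := natDegree_add_le (C (tp * u₁.eval 1 / 2) * ((1 + X) ^ 2 * u₁)
        + C (tp * u₂.eval 1 / 2) * ((1 + X) ^ 2 * u₂))
      (C (tm * v₁.eval (-1) / 2) * ((1 - X) ^ 2 * v₁))
    have s3 := natDegree_add_le (C (tp * u₁.eval 1 / 2) * ((1 + X) ^ 2 * u₁)
        + C (tp * u₂.eval 1 / 2) * ((1 + X) ^ 2 * u₂)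
        + C (tm * v₁.eval (-1) / 2) * ((1 - X) ^ 2 * v₁))
      (C (tm * v₂.eval (-1) / 2) * ((1 - X) ^ 2 * v₂))
    rw [← hsP] at s3
    rw [le_max_iff] at s1 s2 s3
    omega
  · -- value at -1
    rw [hsEval (-1)]
    linear_combination htm2
  · -- value at 1
    rw [hsEval 1]
    linear_combination htp2
  · -- pointwise
    intro x hx
    have hev : f.eval x = (1 + x) * ((u₁.eval x) ^ 2 + (u₂.eval x) ^ 2)
        + (1 - x) * ((v₁.eval x) ^ 2 + (v₂.eval x) ^ 2) := by
      rw [he]; simp only [eval_add, eval_mul, eval_pow, eval_sub, eval_one, eval_X]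
    have hg2 : 2 * ((tp * u₁.eval 1) * u₁.eval x + (tp * u₂.eval 1) * u₂.eval x) ^ 2
        ≤ (u₁.eval x) ^ 2 + (u₂.eval x) ^ 2 := cs_half (by linarith [htp1])
    have hd2 : 2 * ((tm * v₁.eval (-1)) * v₁.eval x + (tm * v₂.eval (-1)) * v₂.eval x) ^ 2
        ≤ (v₁.eval x) ^ 2 + (v₂.eval x) ^ 2 := cs_half (by linarith [htm1])
    have hmain := odd_pointwise hx.1 hx.2
      (by positivity : (0:ℝ) ≤ (u₁.eval x) ^ 2 + (u₂.eval x) ^ 2)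
      (by positivity : (0:ℝ) ≤ (v₁.eval x) ^ 2 + (v₂.eval x) ^ 2) hg2 hd2
    rw [hev, hsEval x]
    calc (tp * u₁.eval 1 / 2 * ((1 + x) ^ 2 * u₁.eval x)
          + tp * u₂.eval 1 / 2 * ((1 + x) ^ 2 * u₂.eval x)
          + tm * v₁.eval (-1) / 2 * ((1 - x) ^ 2 * v₁.eval x)
          + tm * v₂.eval (-1) / 2 * ((1 - x) ^ 2 * v₂.eval x)) ^ 2
        = ((1 + x) ^ 2 / 2 * ((tp * u₁.eval 1) * u₁.eval x + (tp * u₂.eval 1) * u₂.eval x)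
          + (1 - x) ^ 2 / 2 * ((tm * v₁.eval (-1)) * v₁.eval x
            + (tm * v₂.eval (-1)) * v₂.eval x)) ^ 2 := by ring
      _ ≤ _ := hmain

theorem main {f : ℝ[X]} (hf : ∀ x ∈ Set.Icc (-1 : ℝ) 1, 0 ≤ f.eval x) {a b : ℝ}
    (ha : a ^ 2 ≤ f.eval (-1)) (hb : b ^ 2 ≤ f.eval 1) :
    ∃ s : ℝ[X], (s ^ 2).natDegree ≤ f.natDegree + 3 ∧ s.eval (-1) = a ∧ s.eval 1 = b ∧
      ∀ x ∈ Set.Icc (-1 : ℝ) 1, (s.eval x) ^ 2 ≤ f.eval x := by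
  rcases rep_main f.natDegree f le_rfl hf with hE | hO
  · exact final_even hf ha hb hE
  · exact final_odd hf ha hb hO

end Stmt1Aux

/-- Adapted square root lemma: given `f ≥ 0` on `[-1,1]` and `a² ≤ f(-1)`, `b² ≤ f(1)`,
there is `s` with `deg(s²) ≤ deg f + 3`, `s(-1) = a`, `s(1) = b`, and `s² ≤ f` on `[-1,1]`. -/
theorem stmt1 (f : Polynomial ℝ) (hf : ∀ x ∈ Set.Icc (-1 : ℝ) 1, 0 ≤ f.eval x)
    (a b : ℝ) (ha : a ^ 2 ≤ f.eval (-1)) (hb : b ^ 2 ≤ f.eval 1) :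
    ∃ s : Polynomial ℝ,
      (s ^ 2).natDegree ≤ f.natDegree + 3 ∧
      s.eval (-1) = a ∧ s.eval 1 = b ∧
      ∀ x ∈ Set.Icc (-1 : ℝ) 1, (s.eval x) ^ 2 ≤ f.eval x :=
  Stmt1Aux.main hf ha hb
end
end

section
/- Let f ∈ ℝ[t] be non-negative on [-1,1] with f(-1) = f(1) = 0. Then there exists a sum of squares r ∈ ℝ[t] and polynomials s₁, s₂ ∈ ℝ[t] vanishing at ±1 such that f = s₁² + s₂² + r·(1-t²). -/
open Polynomial

namespace Stmt2Aux

/-- A square is a sum of squares. -/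
lemma isSumSq_mul_self {R : Type*} [AddCommMonoid R] [Mul R] (q : R) : IsSumSq (q * q) := by
  simpa using IsSumSq.sq_add q 0 IsSumSq.zero

lemma isSumSq_C {c : ℝ} (hc : 0 ≤ c) : IsSumSq (C c : ℝ[X]) := by
  have : (C c : ℝ[X]) = C (Real.sqrt c) * C (Real.sqrt c) := by
    rw [← C_mul, Real.mul_self_sqrt hc]
  rw [this]; exact isSumSq_mul_self _

lemma isSumSq_mul_sq {R : Type*} [CommRing R] {p : R} (hp : IsSumSq p) (q : R) :
    IsSumSq (p * (q * q)) := by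
  induction hp with
  | zero => simpa using IsSumSq.zero
  | @sq_add a S pS ih =>
      have h : (a * a + S) * (q * q) = (a * q) * (a * q) + S * (q * q) := by ring
      rw [h]; exact IsSumSq.sq_add _ ih

lemma isSumSq_mul {R : Type*} [CommRing R] {p q : R} (hp : IsSumSq p) (hq : IsSumSq q) :
    IsSumSq (p * q) := by
  induction hp with
  | zero => simpa using IsSumSq.zero
  | @sq_add a S pS ih =>
      have h : (a * a + S) * q = q * (a * a) + S * q := by ring
      rw [h]; exact (isSumSq_mul_sq hq a).add ih

lemma isSumSq_eval_nonneg {p : ℝ[X]} (hp : IsSumSq p) (x : ℝ) : 0 ≤ p.eval x := by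
  induction hp with
  | zero => simp
  | @sq_add a S pS ih =>
      simp only [eval_add, eval_mul]
      nlinarith [mul_self_nonneg (a.eval x)]

/-- Membership in the preordering generated by `1 - X²`. -/
def InT (p : ℝ[X]) : Prop :=
  ∃ σ τ : ℝ[X], IsSumSq σ ∧ IsSumSq τ ∧ p = σ + τ * (1 - X ^ 2)

lemma InT.of_isSumSq {p : ℝ[X]} (hp : IsSumSq p) : InT p :=
  ⟨p, 0, hp, IsSumSq.zero, by ring⟩

lemma InT.add {p q : ℝ[X]} (hp : InT p) (hq : InT q) : InT (p + q) := by
  obtain ⟨σ1, τ1, h1, h2, h3⟩ := hp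
  obtain ⟨σ2, τ2, h4, h5, h6⟩ := hq
  exact ⟨σ1 + σ2, τ1 + τ2, h1.add h4, h2.add h5, by rw [h3, h6]; ring⟩

lemma InT.mul {p q : ℝ[X]} (hp : InT p) (hq : InT q) : InT (p * q) := by
  obtain ⟨σ1, τ1, h1, h2, h3⟩ := hp
  obtain ⟨σ2, τ2, h4, h5, h6⟩ := hq
  refine ⟨σ1 * σ2 + (τ1 * τ2) * ((1 - X ^ 2) * (1 - X ^ 2)),
    σ1 * τ2 + τ1 * σ2, (isSumSq_mul h1 h4).add (isSumSq_mul_sq (isSumSq_mul h2 h5) _),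
    (isSumSq_mul h1 h5).add (isSumSq_mul h2 h4), ?_⟩
  rw [h3, h6]; ring

lemma InT_C {c : ℝ} (hc : 0 ≤ c) : InT (C c) := InT.of_isSumSq (isSumSq_C hc)

lemma InT_one_sub_X : InT (1 - X : ℝ[X]) := by
  set a : ℝ := Real.sqrt (1 / 2) with ha
  have haa : (C a * C a : ℝ[X]) = C (1 / 2) := by
    rw [← C_mul, Real.mul_self_sqrt (by norm_num)]
  have h2 : (C (1 / 2 : ℝ) : ℝ[X]) * 2 = 1 := by
    rw [show (2 : ℝ[X]) = C 2 from (map_ofNat C 2).symm, ← C_mul]; norm_num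
  refine ⟨(C a * (1 - X)) * (C a * (1 - X)), C (1 / 2), isSumSq_mul_self _,
    isSumSq_C (by norm_num), ?_⟩
  linear_combination (-(1 - X) * (1 - X)) * haa + (-(1 - X)) * h2

lemma InT_one_add_X : InT (1 + X : ℝ[X]) := by
  set a : ℝ := Real.sqrt (1 / 2) with ha
  have haa : (C a * C a : ℝ[X]) = C (1 / 2) := by
    rw [← C_mul, Real.mul_self_sqrt (by norm_num)]
  have h2 : (C (1 / 2 : ℝ) : ℝ[X]) * 2 = 1 := by
    rw [show (2 : ℝ[X]) = C 2 from (map_ofNat C 2).symm, ← C_mul]; norm_num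
  refine ⟨(C a * (1 + X)) * (C a * (1 + X)), C (1 / 2), isSumSq_mul_self _,
    isSumSq_C (by norm_num), ?_⟩
  linear_combination (-(1 + X) * (1 + X)) * haa + (-(1 + X)) * h2

/-- If `p(a) = 0` and `p'(a) = 0` then `(X - a)²` divides `p`. -/
lemma sq_dvd_of_root_deriv {p : ℝ[X]} {a : ℝ} (hroot : p.IsRoot a)
    (hderiv : (derivative p).eval a = 0) :
    ∃ k : ℝ[X], p = (X - C a) * (X - C a) * k := by
  obtain ⟨h1, hfact⟩ := (dvd_iff_isRoot.mpr hroot)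
  have hd : (derivative p).eval a = h1.eval a := by
    rw [hfact, derivative_mul]
    simp
  have h1root : h1.IsRoot a := by
    unfold Polynomial.IsRoot
    rw [← hd, hderiv]
  obtain ⟨k, hk⟩ := (dvd_iff_isRoot.mpr h1root)
  exact ⟨k, by rw [hfact, hk]; ring⟩

/-- Derivative vanishes at an interior minimum with value 0. -/
lemma deriv_eval_zero_of_min {p : ℝ[X]} {a : ℝ} {s : Set ℝ} (hs : s ∈ nhds a)
    (hroot : p.IsRoot a) (hp : ∀ x ∈ s, 0 ≤ p.eval x) :
    (derivative p).eval a = 0 := by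
  have hmin : IsLocalMin (fun x => p.eval x) a := by
    refine Filter.eventually_of_mem hs fun x hx => ?_
    simpa [hroot.eq_zero] using hp x hx
  have := hmin.deriv_eq_zero
  rwa [Polynomial.deriv] at this

/-- A polynomial with no real root and positive degree has a positive-definite
quadratic factor which is a sum of two squares. -/
lemma quadratic_factor {p : ℝ[X]} (hdeg : 0 < p.natDegree)
    (hno : ∀ x : ℝ, ¬ p.IsRoot x) :
    ∃ (r i : ℝ) (k : ℝ[X]), i ≠ 0 ∧ p = ((X - C r) ^ 2 + C i ^ 2) * k := by
  have hp0 : p ≠ 0 := fun h => by simp [h] at hdeg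
  set f : ℝ →+* ℂ := Complex.ofRealHom with hf
  have hdeg' : 0 < (p.map f).degree := by
    rw [degree_map_eq_of_injective Complex.ofReal_injective]
    exact natDegree_pos_iff_degree_pos.mp hdeg
  obtain ⟨z, hz⟩ := Complex.exists_root hdeg'
  have him : z.im ≠ 0 := by
    intro h0
    apply hno z.re
    have heq : (p.map f).eval (f z.re) = f (p.eval z.re) := by
      rw [eval_map, eval₂_at_apply]
    have hzre : (f z.re : ℂ) = z := by
      apply Complex.ext <;> simp [hf, h0]
    rw [hzre, hz.eq_zero] at heq
    have h1 : (↑(p.eval z.re) : ℂ) = 0 := heq.symm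
    have : p.eval z.re = 0 := by exact_mod_cast h1
    exact this
  -- conjugate root
  have hzbar : (p.map f).IsRoot ((starRingEnd ℂ) z) := by
    unfold Polynomial.IsRoot
    have : (starRingEnd ℂ) ((p.map f).eval z) = (p.map f).eval ((starRingEnd ℂ) z) := by
      rw [eval_map, eval_map, Polynomial.hom_eval₂]
      congr 1
      ext x
      simp [hf, Complex.conj_ofReal]
    rw [← this, hz.eq_zero, map_zero]
  obtain ⟨r1, hr1⟩ := dvd_iff_isRoot.mpr hz
  have hzbar' : r1.IsRoot ((starRingEnd ℂ) z) := by
    have := hzbar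
    unfold Polynomial.IsRoot at this ⊢
    rw [hr1] at this
    simp only [eval_mul, eval_sub, eval_X, eval_C] at this
    have hne : (starRingEnd ℂ) z - z ≠ 0 := by
      intro h
      apply him
      have : (starRingEnd ℂ) z = z := by linear_combination h
      have := Complex.conj_eq_iff_im.mp this
      exact this
    exact (mul_eq_zero.mp this).resolve_left hne
  obtain ⟨s, hs⟩ := dvd_iff_isRoot.mpr hzbar'
  set q : ℝ[X] := (X - C z.re) ^ 2 + C z.im ^ 2 with hq
  have hmapq : q.map f = (X - C z) * (X - C ((starRingEnd ℂ) z)) := by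
    have e1 : (C z + C ((starRingEnd ℂ) z) : ℂ[X]) = C (f z.re) + C (f z.re) := by
      rw [← C_add, ← C_add]
      congr 1
      have h := Complex.add_conj z
      push_cast at h
      simp only [hf, Complex.ofRealHom_eq_coe]
      linear_combination h
    have e2 : (C z * C ((starRingEnd ℂ) z) : ℂ[X])
        = C (f z.re) * C (f z.re) + C (f z.im) * C (f z.im) := by
      rw [← C_mul, ← C_mul, ← C_mul, ← C_add]
      congr 1
      have h := Complex.mul_conj z
      rw [Complex.normSq_apply] at h
      push_cast at h
      simp only [hf, Complex.ofRealHom_eq_coe]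
      linear_combination h
    rw [hq]
    push_cast [Polynomial.map_add, Polynomial.map_pow, Polynomial.map_sub,
      Polynomial.map_X, Polynomial.map_C]
    linear_combination (X : ℂ[X]) * e1 - e2
  have hdvd : q ∣ p := by
    rw [← map_dvd_map' f]
    rw [hmapq, hr1, hs]
    exact ⟨s, by ring⟩
  obtain ⟨k, hk⟩ := hdvd
  exact ⟨z.re, z.im, k, him, by rw [← hq, hk]⟩

lemma q_natDegree (r i : ℝ) : ((X - C r) ^ 2 + C i ^ 2 : ℝ[X]).natDegree = 2 := by
  compute_degree!

lemma q_eval_pos (r i : ℝ) (hi : i ≠ 0) (x : ℝ) :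
    0 < ((X - C r) ^ 2 + C i ^ 2 : ℝ[X]).eval x := by
  simp only [eval_add, eval_pow, eval_sub, eval_X, eval_C]
  positivity

lemma q_isSumSq (r i : ℝ) : IsSumSq ((X - C r) ^ 2 + C i ^ 2 : ℝ[X]) := by
  have : ((X - C r) ^ 2 + C i ^ 2 : ℝ[X])
      = (X - C r) * (X - C r) + (C i * C i + 0) := by ring
  rw [this]
  exact IsSumSq.sq_add _ (IsSumSq.sq_add _ IsSumSq.zero)

/-- Every polynomial nonnegative on ℝ is a sum of two squares. -/
lemma sum_two_squares : ∀ n : ℕ, ∀ p : ℝ[X], p.natDegree ≤ n →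
    (∀ x : ℝ, 0 ≤ p.eval x) → ∃ a b : ℝ[X], p = a ^ 2 + b ^ 2 := by
  intro n
  induction n using Nat.strong_induction_on with
  | _ n ih =>
    intro p hdeg hp
    by_cases hp0 : p = 0
    · exact ⟨0, 0, by simp [hp0]⟩
    by_cases hroot : ∃ a : ℝ, p.IsRoot a
    · obtain ⟨a, ha⟩ := hroot
      have hderiv : (derivative p).eval a = 0 :=
        deriv_eval_zero_of_min Filter.univ_mem ha (fun x _ => hp x)
      obtain ⟨k, hk⟩ := sq_dvd_of_root_deriv ha hderiv
      have hk0 : k ≠ 0 := by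
        intro h; apply hp0; rw [hk, h, mul_zero]
      have hdk : k.natDegree + 2 ≤ n := by
        have := hdeg
        rw [hk, natDegree_mul (mul_ne_zero (X_sub_C_ne_zero a) (X_sub_C_ne_zero a)) hk0, natDegree_mul (X_sub_C_ne_zero a)
          (X_sub_C_ne_zero a), natDegree_X_sub_C] at this
        omega
      have hknn : ∀ x : ℝ, 0 ≤ k.eval x := by
        have hne : ∀ x : ℝ, x ≠ a → 0 ≤ k.eval x := by
          intro x hx
          have h1 := hp x
          rw [hk] at h1
          simp only [eval_mul, eval_sub, eval_X, eval_C] at h1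
          have h2 : 0 < (x - a) * (x - a) := mul_self_pos.mpr (sub_ne_zero_of_ne hx)
          nlinarith
        intro x
        rcases eq_or_ne x a with rfl | hx
        · have hcont : Filter.Tendsto (fun y : ℝ => k.eval y)
              (nhdsWithin x (Set.Ioi x)) (nhds (k.eval x)) :=
            (Polynomial.continuous (p := k)).continuousWithinAt
          refine ge_of_tendsto hcont ?_
          refine Filter.eventually_of_mem self_mem_nhdsWithin fun y hy => ?_
          exact hne y (ne_of_gt hy)
        · exact hne x hx
      obtain ⟨u, v, huv⟩ := ih (k.natDegree) (by omega) k le_rfl hknn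
      exact ⟨(X - C a) * u, (X - C a) * v, by rw [hk, huv]; ring⟩
    · push_neg at hroot
      rcases Nat.eq_zero_or_pos p.natDegree with h0 | hpos
      · have hc : p = C (p.coeff 0) := eq_C_of_natDegree_eq_zero h0
        have hc0 : 0 ≤ p.coeff 0 := by
          have := hp 0
          rw [hc] at this; simpa using this
        refine ⟨C (Real.sqrt (p.coeff 0)), 0, ?_⟩
        rw [← C_pow, Real.sq_sqrt hc0]
        simpa using hc
      · obtain ⟨r, i, k, hi, hk⟩ := quadratic_factor hpos hroot
        have hk0 : k ≠ 0 := by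
          intro h; apply hp0; rw [hk, h, mul_zero]
        have hq0 : ((X - C r) ^ 2 + C i ^ 2 : ℝ[X]) ≠ 0 := by
          intro h
          have := q_eval_pos r i hi 0
          rw [h] at this; simp at this
        have hdk : k.natDegree + 2 ≤ n := by
          have := hdeg
          rw [hk, natDegree_mul hq0 hk0, q_natDegree] at this
          omega
        have hknn : ∀ x : ℝ, 0 ≤ k.eval x := by
          intro x
          have h1 := hp x
          have h2 := q_eval_pos r i hi x
          rw [hk, eval_mul] at h1
          nlinarith
        obtain ⟨u, v, huv⟩ := ih (k.natDegree) (by omega) k le_rfl hknn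
        refine ⟨(X - C r) * u - C i * v, (X - C r) * v + C i * u, ?_⟩
        rw [hk, huv]; ring

/-- Main cone membership: nonneg on `[-1,1]` implies membership in the preordering. -/
lemma mem_cone : ∀ n : ℕ, ∀ g : ℝ[X], g.natDegree ≤ n →
    (∀ x ∈ Set.Icc (-1 : ℝ) 1, 0 ≤ g.eval x) → InT g := by
  intro n
  induction n using Nat.strong_induction_on with
  | _ n ih =>
    intro g hdeg hg
    by_cases hg0 : g = 0
    · exact ⟨0, 0, IsSumSq.zero, IsSumSq.zero, by simp [hg0]⟩
    by_cases hroot : ∃ a : ℝ, g.IsRoot a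
    · obtain ⟨a, ha⟩ := hroot
      obtain ⟨h1p, hfact⟩ := dvd_iff_isRoot.mpr ha
      have hh0 : h1p ≠ 0 := by
        intro h; apply hg0; rw [hfact, h, mul_zero]
      have hdg : g.natDegree = 1 + h1p.natDegree := by
        rw [hfact, natDegree_mul (X_sub_C_ne_zero a) hh0, natDegree_X_sub_C]
      rcases lt_or_ge a 1 with ha1 | ha1
      · rcases lt_or_ge (-1 : ℝ) a with ha2 | ha2
        · -- interior root
          have hmem : Set.Ioo (-1 : ℝ) 1 ∈ nhds a := isOpen_Ioo.mem_nhds ⟨ha2, ha1⟩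
          have hderiv := deriv_eval_zero_of_min hmem ha
            (fun x hx => hg x (Set.Ioo_subset_Icc_self hx))
          obtain ⟨k, hk⟩ := sq_dvd_of_root_deriv ha hderiv
          have hk0 : k ≠ 0 := by
            intro h; apply hg0; rw [hk, h, mul_zero]
          have hdk : k.natDegree + 2 ≤ n := by
            have := hdeg
            rw [hk, natDegree_mul (mul_ne_zero (X_sub_C_ne_zero a) (X_sub_C_ne_zero a)) hk0,
              natDegree_mul (X_sub_C_ne_zero a) (X_sub_C_ne_zero a),
              natDegree_X_sub_C] at this
            omega
          have hknn : ∀ x ∈ Set.Icc (-1 : ℝ) 1, 0 ≤ k.eval x := by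
            have hne : ∀ x ∈ Set.Icc (-1 : ℝ) 1, x ≠ a → 0 ≤ k.eval x := by
              intro x hx hxa
              have hgx := hg x hx
              rw [hk] at hgx
              simp only [eval_mul, eval_sub, eval_X, eval_C] at hgx
              have h2 : 0 < (x - a) * (x - a) := mul_self_pos.mpr (sub_ne_zero_of_ne hxa)
              nlinarith
            intro x hx
            rcases eq_or_ne x a with rfl | hxa
            · have hcont : Filter.Tendsto (fun y : ℝ => k.eval y)
                  (nhdsWithin x (Set.Ioi x)) (nhds (k.eval x)) :=
                (Polynomial.continuous (p := k)).continuousWithinAt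
              refine ge_of_tendsto hcont ?_
              refine Filter.eventually_of_mem
                (Ioo_mem_nhdsGT_of_mem (show x ∈ Set.Ico x 1 from ⟨le_refl x, ha1⟩))
                fun y hy => ?_
              exact hne y ⟨by linarith [hy.1, hy.2], le_of_lt hy.2⟩ (ne_of_gt hy.1)
            · exact hne x hx hxa
          have ihk := ih k.natDegree (by omega) k le_rfl hknn
          have : InT (((X - C a) * (X - C a)) * k) :=
            (InT.of_isSumSq (isSumSq_mul_self _)).mul ihk
          rwa [← hk] at this
        · -- root a ≤ -1
          have hknn : ∀ x ∈ Set.Icc (-1 : ℝ) 1, 0 ≤ h1p.eval x := by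
            have hne : ∀ x ∈ Set.Icc (-1 : ℝ) 1, -1 < x → 0 ≤ h1p.eval x := by
              intro x hx hx1
              have hgx := hg x hx
              rw [hfact] at hgx
              simp only [eval_mul, eval_sub, eval_X, eval_C] at hgx
              have h2 : 0 < x - a := by linarith
              nlinarith
            intro x hx
            rcases eq_or_lt_of_le hx.1 with heq | hlt
            · subst heq
              have hcont : Filter.Tendsto (fun y : ℝ => h1p.eval y)
                  (nhdsWithin (-1 : ℝ) (Set.Ioi (-1 : ℝ))) (nhds (h1p.eval (-1))) :=
                (Polynomial.continuous (p := h1p)).continuousWithinAt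
              refine ge_of_tendsto hcont ?_
              refine Filter.eventually_of_mem
                (Ioo_mem_nhdsGT_of_mem
                  (show (-1 : ℝ) ∈ Set.Ico (-1 : ℝ) 1 by constructor <;> norm_num))
                fun y hy => ?_
              exact hne y ⟨le_of_lt hy.1, le_of_lt hy.2⟩ hy.1
            · exact hne x hx hlt
          have ihk := ih h1p.natDegree (by omega) h1p le_rfl hknn
          have hlin : InT (X - C a) := by
            have he : (X - C a : ℝ[X]) = (1 + X) + C (-a - 1) := by
              rw [C_sub, C_neg, C_1]; ring
            rw [he]
            exact InT_one_add_X.add (InT_C (by linarith))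
          have : InT ((X - C a) * h1p) := hlin.mul ihk
          rwa [← hfact] at this
      · -- root a ≥ 1
        set k : ℝ[X] := -h1p with hkdef
        have hgk : g = (C a - X) * k := by rw [hfact, hkdef]; ring
        have hknn : ∀ x ∈ Set.Icc (-1 : ℝ) 1, 0 ≤ k.eval x := by
          have hne : ∀ x ∈ Set.Icc (-1 : ℝ) 1, x < 1 → 0 ≤ k.eval x := by
            intro x hx hx1
            have hgx := hg x hx
            rw [hgk] at hgx
            simp only [eval_mul, eval_sub, eval_X, eval_C] at hgx
            have h2 : 0 < a - x := by linarith
            nlinarith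
          intro x hx
          rcases eq_or_lt_of_le hx.2 with heq | hlt
          · subst heq
            have hcont : Filter.Tendsto (fun y : ℝ => k.eval y)
                (nhdsWithin (1 : ℝ) (Set.Iio (1 : ℝ))) (nhds (k.eval 1)) :=
              (Polynomial.continuous (p := k)).continuousWithinAt
            refine ge_of_tendsto hcont ?_
            refine Filter.eventually_of_mem
              (Ioo_mem_nhdsLT_of_mem
                (show (1 : ℝ) ∈ Set.Ioc (-1 : ℝ) 1 by constructor <;> norm_num))
              fun y hy => ?_
            exact hne y ⟨le_of_lt hy.1, le_of_lt hy.2⟩ hy.2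
          · exact hne x hx hlt
        have hkdeg : k.natDegree = h1p.natDegree := by rw [hkdef, natDegree_neg]
        have ihk := ih k.natDegree (by omega) k le_rfl hknn
        have hlin : InT (C a - X) := by
          have he : (C a - X : ℝ[X]) = (1 - X) + C (a - 1) := by
            rw [C_sub, C_1]; ring
          rw [he]
          exact InT_one_sub_X.add (InT_C (by linarith))
        have : InT ((C a - X) * k) := hlin.mul ihk
        rwa [← hgk] at this
    · push_neg at hroot
      rcases Nat.eq_zero_or_pos g.natDegree with h0 | hpos
      · have hc : g = C (g.coeff 0) := eq_C_of_natDegree_eq_zero h0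
        have hc0 : 0 ≤ g.coeff 0 := by
          have := hg 0 (by norm_num)
          rw [hc] at this; simpa using this
        rw [hc]
        exact InT_C hc0
      · obtain ⟨r, i, k, hi, hk⟩ := quadratic_factor hpos hroot
        have hk0 : k ≠ 0 := by
          intro h; apply hg0; rw [hk, h, mul_zero]
        have hq0 : ((X - C r) ^ 2 + C i ^ 2 : ℝ[X]) ≠ 0 := by
          intro h
          have := q_eval_pos r i hi 0
          rw [h] at this; simp at this
        have hdk : k.natDegree + 2 ≤ n := by
          have := hdeg
          rw [hk, natDegree_mul hq0 hk0, q_natDegree] at this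
          omega
        have hknn : ∀ x ∈ Set.Icc (-1 : ℝ) 1, 0 ≤ k.eval x := by
          intro x hx
          have h1 := hg x hx
          have h2 := q_eval_pos r i hi x
          rw [hk, eval_mul] at h1
          nlinarith
        have ihk := ih k.natDegree (by omega) k le_rfl hknn
        have : InT (((X - C r) ^ 2 + C i ^ 2) * k) :=
          (InT.of_isSumSq (q_isSumSq r i)).mul ihk
        rwa [← hk] at this

end Stmt2Aux

/-- If `f ≥ 0` on `[-1,1]` with `f(-1) = f(1) = 0`, then `f = s₁² + s₂² + r·(1-t²)` with
`r` a sum of squares and `s₁, s₂` vanishing at `±1`. -/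
theorem stmt2 (f : Polynomial ℝ) (hf : ∀ x ∈ Set.Icc (-1 : ℝ) 1, 0 ≤ f.eval x)
    (h1 : f.eval (-1) = 0) (h2 : f.eval 1 = 0) :
    ∃ r s₁ s₂ : Polynomial ℝ,
      IsSumSq r ∧
      s₁.eval (-1) = 0 ∧ s₁.eval 1 = 0 ∧
      s₂.eval (-1) = 0 ∧ s₂.eval 1 = 0 ∧
      f = s₁ ^ 2 + s₂ ^ 2 + r * (1 - X ^ 2) := by
  obtain ⟨σ, τ, hσ, hτ, hrep⟩ := Stmt2Aux.mem_cone f.natDegree f le_rfl hf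
  have hσnn : ∀ x : ℝ, 0 ≤ σ.eval x := Stmt2Aux.isSumSq_eval_nonneg hσ
  obtain ⟨s₁, s₂, hs⟩ := Stmt2Aux.sum_two_squares σ.natDegree σ le_rfl hσnn
  have hσ1 : σ.eval 1 = 0 := by
    have := congrArg (eval 1) hrep
    simp only [eval_add, eval_mul, eval_sub, eval_one, eval_pow, eval_X, one_pow,
      sub_self, mul_zero, add_zero] at this
    rw [h2] at this
    linarith
  have hσ2 : σ.eval (-1) = 0 := by
    have := congrArg (eval (-1)) hrep
    simp only [eval_add, eval_mul, eval_sub, eval_one, eval_pow, eval_X] at this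
    rw [h1] at this
    nlinarith
  have hs1 : s₁.eval 1 ^ 2 + s₂.eval 1 ^ 2 = 0 := by
    have := congrArg (eval 1) hs
    simp only [eval_add, eval_pow] at this
    rw [hσ1] at this
    linarith
  have hs2 : s₁.eval (-1) ^ 2 + s₂.eval (-1) ^ 2 = 0 := by
    have := congrArg (eval (-1)) hs
    simp only [eval_add, eval_pow] at this
    rw [hσ2] at this
    linarith
  have e1 : s₁.eval 1 = 0 := by nlinarith [sq_nonneg (s₁.eval 1), sq_nonneg (s₂.eval 1)]
  have e2 : s₂.eval 1 = 0 := by nlinarith [sq_nonneg (s₁.eval 1), sq_nonneg (s₂.eval 1)]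
  have e3 : s₁.eval (-1) = 0 := by
    nlinarith [sq_nonneg (s₁.eval (-1)), sq_nonneg (s₂.eval (-1))]
  have e4 : s₂.eval (-1) = 0 := by
    nlinarith [sq_nonneg (s₁.eval (-1)), sq_nonneg (s₂.eval (-1))]
  exact ⟨τ, s₁, s₂, hτ, e3, e1, e4, e2, by rw [hrep, hs]⟩
end

section
/- Let f ∈ ℝ[t] be non-negative on [-1,1], let k ∈ ℕ, and let a, b ∈ ℝ^k be vectors with f(-1) = ‖a‖² and f(1) = ‖b‖² (sum of squares of coordinates). Then there exist polynomials s₁,…,s_{k+2} ∈ ℝ[t] and a sum of squares r ∈ ℝ[t] such that: f = Σᵢ sᵢ² + r·(1-t²); sᵢ(-1) = aᵢ and sᵢ(1) = bᵢ for i = 1,…,k; s_{k+1} and s_{k+2} vanish at ±1; and deg(r), deg(sᵢ²) ≤ deg(f)+3k+1 for all i. -/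
open Polynomial

section AuxStmt3
open Filter Set
section helpers
lemma isSumSq_sq (p : Polynomial ℝ) : IsSumSq (p ^ 2) := by
  have : p ^ 2 = p * p + 0 := by ring
  rw [this]; exact IsSumSq.sq_add p IsSumSq.zero

lemma IsSumSq.sqmul {R} [CommRing R] {s : R} (p : R) (hs : IsSumSq s) :
    IsSumSq (p ^ 2 * s) := by
  induction hs with
  | zero => simpa using IsSumSq.zero
  | @sq_add a S hS ih =>
      have : p ^ 2 * (a * a + S) = (p * a) * (p * a) + p ^ 2 * S := by ring
      rw [this]; exact IsSumSq.sq_add _ ih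

lemma IsSumSq.mymul {R} [CommRing R] {s t : R} (hs : IsSumSq s) (ht : IsSumSq t) :
    IsSumSq (s * t) := by
  induction hs with
  | zero => simpa using IsSumSq.zero
  | @sq_add a S hS ih =>
      have : (a * a + S) * t = a ^ 2 * t + S * t := by ring
      rw [this]; exact IsSumSq.add (IsSumSq.sqmul a ht) ih

lemma isSumSq_Cmul {c : ℝ} (hc : 0 ≤ c) {s : Polynomial ℝ} (hs : IsSumSq s) :
    IsSumSq (C c * s) := by
  have : C c * s = (C (Real.sqrt c)) ^ 2 * s := by rw [← C_pow, Real.sq_sqrt hc]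
  rw [this]; exact IsSumSq.sqmul _ hs

lemma isSumSq_C_mul_sq {c : ℝ} (hc : 0 ≤ c) (p : Polynomial ℝ) :
    IsSumSq (C c * p ^ 2) := isSumSq_Cmul hc (isSumSq_sq p)

lemma isSumSq_C {c : ℝ} (hc : 0 ≤ c) : IsSumSq (C c : Polynomial ℝ) := by
  have := isSumSq_C_mul_sq hc (1 : Polynomial ℝ); simpa using this

lemma eval_nonneg_of_isSumSq {s : Polynomial ℝ} (hs : IsSumSq s) (x : ℝ) :
    0 ≤ s.eval x := by
  induction hs with
  | zero => simp
  | @sq_add a S hS ih => simp only [eval_add, eval_mul]; nlinarith [mul_self_nonneg (a.eval x)]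

lemma natDegree_W_le : (1 - X ^ 2 : Polynomial ℝ).natDegree ≤ 2 := by
  apply le_trans (natDegree_sub_le _ _); simp

lemma natDegree_CyX (y : ℝ) : (C y - X : Polynomial ℝ).natDegree = 1 := by
  have h : (C y - X : Polynomial ℝ) = -(X - C y) := by ring
  rw [h, natDegree_neg, natDegree_X_sub_C]

lemma CyX_ne_zero (y : ℝ) : (C y - X : Polynomial ℝ) ≠ 0 := by
  intro hc
  apply X_sub_C_ne_zero y
  have h : (X - C y : Polynomial ℝ) = -(C y - X) := by ring
  rw [h, hc, neg_zero]
end helpers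

section boundary
lemma eval_nonneg_right (g : Polynomial ℝ) {a b : ℝ} (hab : a < b)
    (h : ∀ x ∈ Set.Ioo a b, 0 ≤ g.eval x) : 0 ≤ g.eval b := by
  have hne : (nhdsWithin b (Set.Ioo a b)).NeBot := by
    apply mem_closure_iff_nhdsWithin_neBot.mp
    rw [closure_Ioo hab.ne]; exact ⟨hab.le, le_refl b⟩
  exact ge_of_tendsto ((g.continuous_aeval.tendsto b).mono_left nhdsWithin_le_nhds)
    (eventually_nhdsWithin_of_forall h)

lemma eval_nonneg_left (g : Polynomial ℝ) {a b : ℝ} (hab : a < b)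
    (h : ∀ x ∈ Set.Ioo a b, 0 ≤ g.eval x) : 0 ≤ g.eval a := by
  have hne : (nhdsWithin a (Set.Ioo a b)).NeBot := by
    apply mem_closure_iff_nhdsWithin_neBot.mp
    rw [closure_Ioo hab.ne]; exact ⟨le_refl a, hab.le⟩
  exact ge_of_tendsto ((g.continuous_aeval.tendsto a).mono_left nhdsWithin_le_nhds)
    (eventually_nhdsWithin_of_forall h)
end boundary

section extraction

lemma extract_right {f : Polynomial ℝ} {y : ℝ} (hy1 : 1 ≤ y) (hroot : f.eval y = 0)
    (hf : ∀ x ∈ Set.Icc (-1:ℝ) 1, 0 ≤ f.eval x) :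
    ∃ g, f = (C y - X) * g ∧ (∀ x ∈ Set.Icc (-1:ℝ) 1, 0 ≤ g.eval x) := by
  obtain ⟨h, hh⟩ := (dvd_iff_isRoot (p := f) (a := y)).2 hroot
  refine ⟨-h, by rw [hh]; ring, ?_⟩
  have key : ∀ x ∈ Set.Icc (-1:ℝ) 1, x < y → 0 ≤ (-h).eval x := by
    intro x hx hxy
    have heq : f.eval x = (x - y) * h.eval x := by rw [hh]; simp
    have := hf x hx
    simp only [eval_neg]
    nlinarith
  intro x hx
  rcases lt_or_eq_of_le (le_trans hx.2 hy1) with hlt | heq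
  · exact key x hx hlt
  · subst heq
    have hx1 : x = 1 := le_antisymm hx.2 hy1
    subst hx1
    apply eval_nonneg_right (-h) (show (-1:ℝ) < 1 by norm_num)
    intro z hz
    exact key z ⟨hz.1.le, hz.2.le⟩ hz.2

lemma extract_left {f : Polynomial ℝ} {z : ℝ} (hz1 : z ≤ -1) (hroot : f.eval z = 0)
    (hf : ∀ x ∈ Set.Icc (-1:ℝ) 1, 0 ≤ f.eval x) :
    ∃ g, f = (X - C z) * g ∧ (∀ x ∈ Set.Icc (-1:ℝ) 1, 0 ≤ g.eval x) := by
  obtain ⟨h, hh⟩ := (dvd_iff_isRoot (p := f) (a := z)).2 hroot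
  refine ⟨h, hh, ?_⟩
  have key : ∀ x ∈ Set.Icc (-1:ℝ) 1, z < x → 0 ≤ h.eval x := by
    intro x hx hxz
    have heq : f.eval x = (x - z) * h.eval x := by rw [hh]; simp
    have := hf x hx
    nlinarith
  intro x hx
  rcases lt_or_eq_of_le (le_trans hz1 hx.1) with hlt | heq
  · exact key x hx hlt
  · subst heq
    have hx1 : z = -1 := le_antisymm hz1 hx.1
    subst hx1
    apply eval_nonneg_left h (show (-1:ℝ) < 1 by norm_num)
    intro w hw
    exact key w ⟨hw.1.le, hw.2.le⟩ hw.1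

end extraction

section prodrep

/-- multiply a factor `v₀ + C c * (1-X²)` into a representation. -/
lemma prod_rep {v₀ τ₀ τ₁ : Polynomial ℝ} {c : ℝ} {M : ℕ} (hc : 0 ≤ c)
    (hv : IsSumSq v₀) (hv2 : v₀.natDegree ≤ 2)
    (ht0 : IsSumSq τ₀) (ht1 : IsSumSq τ₁)
    (hM0 : τ₀.natDegree ≤ M) (hM1 : (τ₁ * (1 - X ^ 2)).natDegree ≤ M) :
    ∃ σ₀ σ₁ : Polynomial ℝ, IsSumSq σ₀ ∧ IsSumSq σ₁ ∧
      (v₀ + C c * (1 - X ^ 2)) * (τ₀ + τ₁ * (1 - X ^ 2)) = σ₀ + σ₁ * (1 - X ^ 2) ∧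
      σ₀.natDegree ≤ M + 2 ∧ (σ₁ * (1 - X ^ 2)).natDegree ≤ M + 2 := by
  refine ⟨v₀ * τ₀ + C c * (τ₁ * (1 - X ^ 2)) * (1 - X ^ 2),
          v₀ * τ₁ + C c * τ₀, ?_, ?_, by ring, ?_, ?_⟩
  · apply IsSumSq.add (hv.mymul ht0)
    have : C c * (τ₁ * (1 - X ^ 2)) * (1 - X ^ 2) = (1 - X ^ 2) ^ 2 * (C c * τ₁) := by ring
    rw [this]
    exact IsSumSq.sqmul _ (isSumSq_Cmul hc ht1)
  · exact IsSumSq.add (hv.mymul ht1) (isSumSq_Cmul hc ht0)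
  · apply le_trans (natDegree_add_le _ _)
    apply max_le
    · exact le_trans (natDegree_mul_le) (by omega)
    · apply le_trans (natDegree_mul_le)
      have h1 : (C c * (τ₁ * (1 - X ^ 2))).natDegree ≤ M :=
        le_trans (natDegree_C_mul_le _ _) hM1
      have := natDegree_W_le
      omega
  · have hrw : (v₀ * τ₁ + C c * τ₀) * (1 - X ^ 2)
        = v₀ * (τ₁ * (1 - X ^ 2)) + C c * (τ₀ * (1 - X ^ 2)) := by ring
    rw [hrw]
    apply le_trans (natDegree_add_le _ _)
    apply max_le
    · exact le_trans (natDegree_mul_le) (by omega)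
    · apply le_trans (natDegree_C_mul_le _ _)
      apply le_trans (natDegree_mul_le)
      have := natDegree_W_le
      omega

end prodrep

/-- A real polynomial nonnegative on all of ℝ is a sum of two squares, with degree bounds. -/
lemma two_squares : ∀ (n : ℕ) (F : Polynomial ℝ), F.natDegree ≤ n → (∀ x : ℝ, 0 ≤ F.eval x) →
    ∃ p q : Polynomial ℝ, F = p ^ 2 + q ^ 2 ∧
      2 * p.natDegree ≤ F.natDegree ∧ 2 * q.natDegree ≤ F.natDegree := by
  intro n
  induction n using Nat.strong_induction_on with
  | _ n IH =>
  intro F hFn hF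
  rcases eq_or_ne F 0 with rfl | hF0
  · exact ⟨0, 0, by simp, by simp, by simp⟩
  rcases Nat.eq_zero_or_pos F.natDegree with hd0 | hdpos
  · -- constant
    obtain ⟨c, rfl⟩ : ∃ c, F = C c := ⟨F.coeff 0, Polynomial.eq_C_of_natDegree_eq_zero hd0⟩
    have hc0 : 0 ≤ c := by have := hF 0; rwa [eval_C] at this
    refine ⟨C (Real.sqrt c), 0, ?_, by simp [hd0], by simp⟩
    rw [← C_pow, Real.sq_sqrt hc0]; ring
  -- nonconstant
  have hn1 : 1 ≤ n := le_trans hdpos hFn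
  by_cases hroot : ∃ y : ℝ, F.eval y = 0
  · obtain ⟨y, hy⟩ := hroot
    -- F = (X - C y)^2 * h
    have hdvd : (X - C y) ∣ F := (dvd_iff_isRoot).2 hy
    obtain ⟨g, hg⟩ := hdvd
    have hgy : g.eval y = 0 := by
      have h1 : 0 ≤ g.eval y := by
        apply eval_nonneg_left g (show y < y + 1 by linarith)
        intro x hx
        have hx1 : y < x := hx.1
        have heq : F.eval x = (x - y) * g.eval x := by rw [hg]; simp
        nlinarith [hF x, hx1]
      have h2 : g.eval y ≤ 0 := by
        have := eval_nonneg_right (-g) (show y - 1 < y by linarith) ?_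
        · simpa using this
        intro x hx
        have hx1 : x < y := hx.2
        have : F.eval x = (x - y) * g.eval x := by rw [hg]; simp
        simp only [eval_neg]
        nlinarith [hF x]
      linarith
    obtain ⟨h, hh⟩ := (dvd_iff_isRoot).2 hgy
    have hFh : F = (X - C y) ^ 2 * h := by rw [hg, hh]; ring
    have hh0 : h ≠ 0 := by rintro rfl; simp at hFh; exact hF0 hFh
    have hXy : (X - C y) ^ 2 ≠ (0 : Polynomial ℝ) := by
      apply pow_ne_zero; exact X_sub_C_ne_zero y
    have hdeg : F.natDegree = 2 + h.natDegree := by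
      rw [hFh, natDegree_mul hXy hh0]
      congr 1
      simp [natDegree_pow]
    have hhnn : ∀ x : ℝ, 0 ≤ h.eval x := by
      intro x
      rcases eq_or_ne x y with rfl | hxy
      · apply eval_nonneg_left h (show x < x + 1 by linarith)
        intro z hz
        have heq : F.eval z = (z - x) ^ 2 * h.eval z := by rw [hFh]; simp
        have h1 : (0:ℝ) < (z - x) ^ 2 := by have := hz.1; nlinarith
        nlinarith [hF z, h1]
      · have heq : F.eval x = (x - y) ^ 2 * h.eval x := by rw [hFh]; simp
        have h2 : (0:ℝ) < (x - y) ^ 2 := by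
          have : x - y ≠ 0 := sub_ne_zero.mpr hxy
          positivity
        nlinarith [hF x, h2]
    obtain ⟨p, q, hpq, hp, hq⟩ := IH (n - 2) (by omega) h (by omega) hhnn
    refine ⟨(X - C y) * p, (X - C y) * q, by rw [hFh, hpq]; ring, ?_, ?_⟩
    · calc 2 * ((X - C y) * p).natDegree ≤ 2 * ((X - C y).natDegree + p.natDegree) := by
            have := natDegree_mul_le (p := X - C y) (q := p); omega
        _ ≤ F.natDegree := by rw [natDegree_X_sub_C]; omega
    · calc 2 * ((X - C y) * q).natDegree ≤ 2 * ((X - C y).natDegree + q.natDegree) := by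
            have := natDegree_mul_le (p := X - C y) (q := q); omega
        _ ≤ F.natDegree := by rw [natDegree_X_sub_C]; omega
  · -- no real root: take complex root
    push_neg at hroot
    obtain ⟨z, hz⟩ : ∃ z : ℂ, aeval z F = 0 := by
      apply IsAlgClosed.exists_aeval_eq_zero
      intro hdeg
      exact absurd (natDegree_eq_zero_iff_degree_le_zero.mpr (le_of_eq hdeg) ) (by omega)
    have him : z.im ≠ 0 := by
      intro h0
      apply hroot z.re
      have : (algebraMap ℝ ℂ) (F.eval z.re) = 0 := by
        rw [← aeval_algebraMap_apply_eq_algebraMap_eval]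
        rw [show (algebraMap ℝ ℂ) z.re = z from by apply Complex.ext <;> simp [h0]]
        exact hz
      exact (map_eq_zero_iff _ (algebraMap ℝ ℂ).injective).mp this
    obtain ⟨h, hh⟩ := F.quadratic_dvd_of_aeval_eq_zero_im_ne_zero hz him
    set q : Polynomial ℝ := X ^ 2 - C (2 * z.re) * X + C (‖z‖ ^ 2) with hqdef
    have hqeval : ∀ x : ℝ, q.eval x = (x - z.re) ^ 2 + z.im ^ 2 := by
      intro x
      simp [hqdef, Complex.sq_norm, Complex.normSq_apply]
      ring
    have hqpos : ∀ x : ℝ, 0 < q.eval x := by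
      intro x; rw [hqeval]; positivity
    have hh0 : h ≠ 0 := by rintro rfl; simp at hh; exact hF0 hh
    have hq0 : q ≠ 0 := fun h0 => by simpa [h0] using hqpos 0
    have hqdeg : q.natDegree = 2 := by
      rw [hqdef]; compute_degree <;> norm_num
    have hdeg : F.natDegree = 2 + h.natDegree := by
      rw [hh, natDegree_mul hq0 hh0, hqdeg]
    have hhnn : ∀ x : ℝ, 0 ≤ h.eval x := by
      intro x
      have : F.eval x = q.eval x * h.eval x := by rw [hh]; simp
      nlinarith [hF x, hqpos x]
    obtain ⟨p', q', hpq, hp, hq⟩ := IH (n - 2) (by omega) h (by omega) hhnn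
    refine ⟨(X - C z.re) * p' - C z.im * q', (X - C z.re) * q' + C z.im * p', ?_, ?_, ?_⟩
    · have hn2 : ‖z‖ ^ 2 = z.re ^ 2 + z.im ^ 2 := by
        rw [Complex.sq_norm, Complex.normSq_apply]; ring
      have hqid : q = (X - C z.re) ^ 2 + (C z.im) ^ 2 := by
        rw [hqdef, hn2, map_add, map_mul, map_ofNat, map_pow, map_pow]
        ring
      rw [hh, hpq, hqid]; ring
    · apply le_trans (mul_le_mul_right (natDegree_sub_le _ _) 2)
      have h1 : ((X - C z.re) * p').natDegree ≤ 1 + p'.natDegree := by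
        have := natDegree_mul_le (p := X - C z.re) (q := p')
        rwa [natDegree_X_sub_C] at this
      have h2 : (C z.im * q').natDegree ≤ q'.natDegree := natDegree_C_mul_le _ _
      omega
    · apply le_trans (mul_le_mul_right (natDegree_add_le _ _) 2)
      have h1 : ((X - C z.re) * q').natDegree ≤ 1 + q'.natDegree := by
        have := natDegree_mul_le (p := X - C z.re) (q := q')
        rwa [natDegree_X_sub_C] at this
      have h2 : (C z.im * p').natDegree ≤ p'.natDegree := natDegree_C_mul_le _ _
      omega

/-- smallest even number `≥ d` (i.e. `d` rounded up to even). -/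
def myE (d : ℕ) : ℕ := 2 * ((d + 1) / 2)

lemma lukacs_aux : ∀ (n : ℕ) (f : Polynomial ℝ), f.natDegree ≤ n →
    (∀ x ∈ Set.Icc (-1:ℝ) 1, 0 ≤ f.eval x) →
    ∃ σ₀ σ₁ : Polynomial ℝ, IsSumSq σ₀ ∧ IsSumSq σ₁ ∧
      f = σ₀ + σ₁ * (1 - X ^ 2) ∧
      σ₀.natDegree ≤ myE f.natDegree ∧ (σ₁ * (1 - X ^ 2)).natDegree ≤ myE f.natDegree := by
  intro n
  induction n using Nat.strong_induction_on with
  | _ n IH =>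
  intro f hfn hf
  by_cases hglob : ∀ x : ℝ, 0 ≤ f.eval x
  · obtain ⟨p, q, hpq, hp, hq⟩ := two_squares f.natDegree f le_rfl hglob
    refine ⟨p ^ 2 + q ^ 2, 0, IsSumSq.add (isSumSq_sq p) (isSumSq_sq q), IsSumSq.zero,
      by rw [hpq]; ring, ?_, by simp⟩
    apply le_trans (natDegree_add_le _ _)
    have h1 := natDegree_pow_le (p := p) (n := 2)
    have h2 := natDegree_pow_le (p := q) (n := 2)
    simp only [myE]
    omega
  push_neg at hglob
  obtain ⟨x₀, hx₀⟩ := hglob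
  have hfne : f ≠ 0 := fun h => by simp [h] at hx₀
  have hd1 : 1 ≤ f.natDegree := by
    by_contra hcon
    push_neg at hcon
    have : f = C (f.coeff 0) := eq_C_of_natDegree_eq_zero (by omega)
    have h1 := hf 1 (by norm_num)
    rw [this] at hx₀ h1
    simp at hx₀ h1
    linarith
  have hn1 : 1 ≤ n := le_trans hd1 hfn
  have cont : Continuous fun x : ℝ => f.eval x := f.continuous_aeval
  by_cases hR : ∃ x, 1 < x ∧ f.eval x < 0
  · obtain ⟨xR, hxR1, hxRneg⟩ := hR
    -- a root y ∈ [1, xR]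
    obtain ⟨y, hyI, hy0⟩ := intermediate_value_Icc' hxR1.le cont.continuousOn
      (Set.mem_Icc.mpr ⟨hxRneg.le, hf 1 (by norm_num)⟩)
    replace hy0 : f.eval y = 0 := hy0
    have hy1 : 1 ≤ y := hyI.1
    by_cases hL : ∃ x, x < -1 ∧ f.eval x < 0
    · -- roots on both sides: pull out (C y - X) * (X - C z)
      obtain ⟨xL, hxL1, hxLneg⟩ := hL
      obtain ⟨z, hzI, hz0⟩ := intermediate_value_Icc hxL1.le cont.continuousOn
        (Set.mem_Icc.mpr ⟨hxLneg.le, hf (-1) (by norm_num)⟩)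
      replace hz0 : f.eval z = 0 := hz0
      have hz1 : z ≤ -1 := hzI.2
      obtain ⟨g1, hfg1, hg1⟩ := extract_right hy1 hy0 hf
      have hg1z : g1.eval z = 0 := by
        have h1 : f.eval z = (y - z) * g1.eval z := by rw [hfg1]; simp
        have h2 : y - z ≠ 0 := by intro h; rw [sub_eq_zero] at h; linarith
        rw [hz0] at h1
        rcases mul_eq_zero.mp h1.symm with h | h
        · exact absurd h h2
        · exact h
      obtain ⟨g, hg1g, hg⟩ := extract_left hz1 hg1z hg1
      have hfeq : f = ((C y - X) * (X - C z)) * g := by rw [hfg1, hg1g]; ring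
      have hg0 : g ≠ 0 := by rintro rfl; rw [mul_zero] at hfeq; exact hfne hfeq
      have hdeg : f.natDegree = 2 + g.natDegree := by
        rw [hfeq, natDegree_mul (mul_ne_zero (CyX_ne_zero y) (X_sub_C_ne_zero z)) hg0,
          natDegree_mul (CyX_ne_zero y) (X_sub_C_ne_zero z), natDegree_CyX, natDegree_X_sub_C]
      -- factor representation
      set A := y - 1 with hA
      set B := -1 - z with hB
      have hA0 : 0 ≤ A := by rw [hA]; linarith
      have hB0 : 0 ≤ B := by rw [hB]; linarith
      set v₀ : Polynomial ℝ := C (A * B) + C (A / 2) * (1 + X) ^ 2 + C (B / 2) * (1 - X) ^ 2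
        with hv₀
      have hvsos : IsSumSq v₀ := by
        refine IsSumSq.add (IsSumSq.add (isSumSq_C (by positivity)) ?_) ?_
        · exact isSumSq_C_mul_sq (by positivity) _
        · exact isSumSq_C_mul_sq (by positivity) _
      have hv2 : v₀.natDegree ≤ 2 := by
        rw [hv₀]
        apply le_trans (natDegree_add_le _ _)
        apply max_le
        · apply le_trans (natDegree_add_le _ _)
          apply max_le (le_of_eq_of_le (natDegree_C _) (by omega))
          apply le_trans (natDegree_C_mul_le _ _)
          apply le_trans (natDegree_pow_le)
          have : (1 + X : Polynomial ℝ).natDegree ≤ 1 := le_trans (natDegree_add_le _ _) (by simp)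
          omega
        · apply le_trans (natDegree_C_mul_le _ _)
          apply le_trans (natDegree_pow_le)
          have : (1 - X : Polynomial ℝ).natDegree ≤ 1 := le_trans (natDegree_sub_le _ _) (by simp)
          omega
      have hcc : (0:ℝ) ≤ 1 + A / 2 + B / 2 := by positivity
      have hFv : (C y - X) * (X - C z) = v₀ + C (1 + A / 2 + B / 2) * (1 - X ^ 2) := by
        apply Polynomial.funext
        intro r
        rw [hv₀, hA, hB]
        simp only [eval_add, eval_mul, eval_sub, eval_pow, eval_C, eval_X, eval_one]
        ring
      obtain ⟨τ₀, τ₁, ht0, ht1, hgrep, hM0, hM1⟩ := IH g.natDegree (by omega) g le_rfl hg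
      obtain ⟨σ₀, σ₁, hs0, hs1, hseq, hb0, hb1⟩ := prod_rep hcc hvsos hv2 ht0 ht1 hM0 hM1
      refine ⟨σ₀, σ₁, hs0, hs1, ?_, ?_, ?_⟩
      · rw [hfeq, hgrep, hFv]
        exact hseq
      · have : myE g.natDegree + 2 = myE f.natDegree := by simp only [myE]; omega
        omega
      · have : myE g.natDegree + 2 = myE f.natDegree := by simp only [myE]; omega
        omega
    · -- negativity only on the right side
      push_neg at hL
      have hIic : ∀ x : ℝ, x ≤ 1 → 0 ≤ f.eval x := by
        intro x hx
        rcases lt_or_ge x (-1) with h | h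
        · exact hL x h
        · exact hf x ⟨h, hx⟩
      rcases Nat.even_or_odd f.natDegree with hev | hodd
      · -- even degree : extract two roots ≥ 1
        have hdegpos : 0 < f.degree := natDegree_pos_iff_degree_pos.mp (by omega)
        have hlead : 0 < f.leadingCoeff := by
          rcases lt_or_gt_of_ne (leadingCoeff_ne_zero.mpr hfne) with hlt | hgt
          · exfalso
            set fm := f.comp (-X) with hfm
            have hXdeg : (-X : Polynomial ℝ).natDegree = 1 := by simp
            have hfmdeg : fm.natDegree = f.natDegree := by
              rw [hfm, natDegree_comp, hXdeg, mul_one]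
            have hfmlead : fm.leadingCoeff = f.leadingCoeff := by
              rw [hfm, leadingCoeff_comp (by rw [hXdeg]; norm_num)]
              have h1 : (-X : Polynomial ℝ).leadingCoeff = -1 := by
                rw [leadingCoeff_neg, leadingCoeff_X]
              rw [h1, hev.neg_one_pow, mul_one]
            have ht := tendsto_atBot_of_leadingCoeff_nonpos fm
              (natDegree_pos_iff_degree_pos.mp (by omega)) (by rw [hfmlead]; linarith)
            obtain ⟨x, hx1, hx2⟩ :=
              ((ht.eventually (eventually_lt_atBot (0:ℝ))).and (eventually_ge_atTop (0:ℝ))).exists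
            have hxe : eval x fm = f.eval (-x) := by rw [hfm, eval_comp]; simp
            have := hIic (-x) (by linarith)
            rw [hxe] at hx1
            linarith
          · exact hgt
        have ht2 := tendsto_atTop_of_leadingCoeff_nonneg f hdegpos hlead.le
        obtain ⟨Mx, hMx1, hMx2⟩ :=
          ((ht2.eventually (eventually_gt_atTop (0:ℝ))).and (eventually_ge_atTop (xR+1))).exists
        obtain ⟨y', hy'I, hy'0⟩ := intermediate_value_Icc (show xR ≤ Mx by linarith)
          cont.continuousOn (Set.mem_Icc.mpr ⟨hxRneg.le, hMx1.le⟩)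
        replace hy'0 : f.eval y' = 0 := hy'0
        have hy'1 : 1 ≤ y' := le_trans hxR1.le hy'I.1
        have hyy' : y ≠ y' := by
          rintro rfl
          have hx : y = xR := le_antisymm hyI.2 hy'I.1
          rw [hx] at hy0; linarith
        obtain ⟨g1, hfg1, hg1⟩ := extract_right hy1 hy0 hf
        have hg1y' : g1.eval y' = 0 := by
          have h1 : f.eval y' = (y - y') * g1.eval y' := by rw [hfg1]; simp
          have h2 : y - y' ≠ 0 := sub_ne_zero.mpr hyy'
          rw [hy'0] at h1
          rcases mul_eq_zero.mp h1.symm with h | h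
          · exact absurd h h2
          · exact h
        obtain ⟨g, hg1g, hg⟩ := extract_right hy'1 hg1y' hg1
        have hfeq : f = ((C y - X) * (C y' - X)) * g := by rw [hfg1, hg1g]; ring
        have hg0 : g ≠ 0 := by rintro rfl; rw [mul_zero] at hfeq; exact hfne hfeq
        have hdeg : f.natDegree = 2 + g.natDegree := by
          rw [hfeq, natDegree_mul (mul_ne_zero (CyX_ne_zero y) (CyX_ne_zero y')) hg0,
            natDegree_mul (CyX_ne_zero y) (CyX_ne_zero y'), natDegree_CyX, natDegree_CyX]
        have hA0 : 0 ≤ y - 1 := by linarith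
        have hA'0 : 0 ≤ y' - 1 := by linarith
        set v₀ : Polynomial ℝ := C ((y-1) * (y'-1)) + (1 - X) ^ 2
            + C (((y-1) + (y'-1)) / 2) * (1 - X) ^ 2 with hv₀
        have hvsos : IsSumSq v₀ := by
          refine IsSumSq.add (IsSumSq.add (isSumSq_C (by positivity)) (isSumSq_sq _)) ?_
          exact isSumSq_C_mul_sq (by positivity) _
        have h1X : (1 - X : Polynomial ℝ).natDegree ≤ 1 := le_trans (natDegree_sub_le _ _) (by simp)
        have hv2 : v₀.natDegree ≤ 2 := by
          rw [hv₀]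
          apply le_trans (natDegree_add_le _ _)
          apply max_le
          · apply le_trans (natDegree_add_le _ _)
            apply max_le (le_of_eq_of_le (natDegree_C _) (by omega))
            apply le_trans (natDegree_pow_le); omega
          · apply le_trans (natDegree_C_mul_le _ _)
            apply le_trans (natDegree_pow_le); omega
        have hcc : (0:ℝ) ≤ ((y-1) + (y'-1)) / 2 := by positivity
        have hFv : (C y - X) * (C y' - X) = v₀ + C (((y-1) + (y'-1)) / 2) * (1 - X ^ 2) := by
          apply Polynomial.funext
          intro r
          rw [hv₀]
          simp only [eval_add, eval_mul, eval_sub, eval_pow, eval_C, eval_X, eval_one]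
          ring
        obtain ⟨τ₀, τ₁, ht0, ht1, hgrep, hM0, hM1⟩ := IH g.natDegree (by omega) g le_rfl hg
        obtain ⟨σ₀, σ₁, hs0, hs1, hseq, hb0, hb1⟩ := prod_rep hcc hvsos hv2 ht0 ht1 hM0 hM1
        refine ⟨σ₀, σ₁, hs0, hs1, ?_, ?_, ?_⟩
        · rw [hfeq, hgrep, hFv]
          exact hseq
        · have : myE g.natDegree + 2 = myE f.natDegree := by simp only [myE]; omega
          omega
        · have : myE g.natDegree + 2 = myE f.natDegree := by simp only [myE]; omega
          omega
      · -- odd degree : extract one root ≥ 1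
        obtain ⟨g, hfeq, hg⟩ := extract_right hy1 hy0 hf
        have hg0 : g ≠ 0 := by rintro rfl; rw [mul_zero] at hfeq; exact hfne hfeq
        have hdeg : f.natDegree = 1 + g.natDegree := by
          rw [hfeq, natDegree_mul (CyX_ne_zero y) hg0, natDegree_CyX]
        have hpar : f.natDegree % 2 = 1 := Nat.odd_iff.mp hodd
        set v₀ : Polynomial ℝ := C (y - 1) + C (1/2) * (1 - X) ^ 2 with hv₀
        have hvsos : IsSumSq v₀ :=
          IsSumSq.add (isSumSq_C (by linarith)) (isSumSq_C_mul_sq (by norm_num) _)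
        have h1X : (1 - X : Polynomial ℝ).natDegree ≤ 1 := le_trans (natDegree_sub_le _ _) (by simp)
        have hv2 : v₀.natDegree ≤ 2 := by
          rw [hv₀]
          apply le_trans (natDegree_add_le _ _)
          apply max_le (le_of_eq_of_le (natDegree_C _) (by omega))
          apply le_trans (natDegree_C_mul_le _ _)
          apply le_trans (natDegree_pow_le); omega
        have hcc : (0:ℝ) ≤ 1/2 := by norm_num
        have hFv : (C y - X) = v₀ + C (1/2) * (1 - X ^ 2) := by
          apply Polynomial.funext
          intro r
          rw [hv₀]
          simp only [eval_add, eval_mul, eval_sub, eval_pow, eval_C, eval_X, eval_one]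
          ring
        obtain ⟨τ₀, τ₁, ht0, ht1, hgrep, hM0, hM1⟩ := IH g.natDegree (by omega) g le_rfl hg
        obtain ⟨σ₀, σ₁, hs0, hs1, hseq, hb0, hb1⟩ := prod_rep hcc hvsos hv2 ht0 ht1 hM0 hM1
        refine ⟨σ₀, σ₁, hs0, hs1, ?_, ?_, ?_⟩
        · rw [hfeq, hgrep, hFv]
          exact hseq
        · have : myE g.natDegree + 2 = myE f.natDegree := by simp only [myE]; omega
          omega
        · have : myE g.natDegree + 2 = myE f.natDegree := by simp only [myE]; omega
          omega
  · -- no negativity on the right : left side only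
    push_neg at hR
    have hxL : ∃ x, x < -1 ∧ f.eval x < 0 := by
      refine ⟨x₀, ?_, hx₀⟩
      by_contra h
      push_neg at h
      rcases le_or_gt x₀ 1 with h1 | h1
      · linarith [hf x₀ ⟨h, h1⟩]
      · linarith [hR x₀ h1]
    obtain ⟨xL, hxL1, hxLneg⟩ := hxL
    have hIci : ∀ x : ℝ, -1 ≤ x → 0 ≤ f.eval x := by
      intro x hx
      rcases le_or_gt x 1 with h | h
      · exact hf x ⟨hx, h⟩
      · linarith [hR x h]
    obtain ⟨z, hzI, hz0⟩ := intermediate_value_Icc hxL1.le cont.continuousOn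
      (Set.mem_Icc.mpr ⟨hxLneg.le, hf (-1) (by norm_num)⟩)
    replace hz0 : f.eval z = 0 := hz0
    have hz1 : z ≤ -1 := hzI.2
    rcases Nat.even_or_odd f.natDegree with hev | hodd
    · -- even degree : two roots ≤ -1
      have hdegpos : 0 < f.degree := natDegree_pos_iff_degree_pos.mp (by omega)
      have hlead : 0 < f.leadingCoeff := by
        rcases lt_or_gt_of_ne (leadingCoeff_ne_zero.mpr hfne) with hlt | hgt
        · exfalso
          have ht := tendsto_atBot_of_leadingCoeff_nonpos f hdegpos hlt.le
          obtain ⟨x, hx1, hx2⟩ :=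
            ((ht.eventually (eventually_lt_atBot (0:ℝ))).and (eventually_ge_atTop (0:ℝ))).exists
          linarith [hIci x (by linarith)]
        · exact hgt
      set fm := f.comp (-X) with hfm
      have hXdeg : (-X : Polynomial ℝ).natDegree = 1 := by simp
      have hfmdeg : fm.natDegree = f.natDegree := by
        rw [hfm, natDegree_comp, hXdeg, mul_one]
      have hfmlead : fm.leadingCoeff = f.leadingCoeff := by
        rw [hfm, leadingCoeff_comp (by rw [hXdeg]; norm_num)]
        have h1 : (-X : Polynomial ℝ).leadingCoeff = -1 := by
          rw [leadingCoeff_neg, leadingCoeff_X]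
        rw [h1, hev.neg_one_pow, mul_one]
      have ht2 := tendsto_atTop_of_leadingCoeff_nonneg fm
        (natDegree_pos_iff_degree_pos.mp (by omega)) (by rw [hfmlead]; linarith)
      obtain ⟨x, hx1, hx2⟩ :=
        ((ht2.eventually (eventually_gt_atTop (0:ℝ))).and (eventually_ge_atTop (-xL+1))).exists
      have hxe : eval x fm = f.eval (-x) := by rw [hfm, eval_comp]; simp
      rw [hxe] at hx1
      obtain ⟨z', hz'I, hz'0⟩ := intermediate_value_Icc' (show -x ≤ xL by linarith)
        cont.continuousOn (Set.mem_Icc.mpr ⟨hxLneg.le, hx1.le⟩)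
      replace hz'0 : f.eval z' = 0 := hz'0
      have hz'1 : z' ≤ -1 := by linarith [hz'I.2]
      have hzz' : z ≠ z' := by
        rintro rfl
        have hx : z = xL := le_antisymm hz'I.2 hzI.1
        rw [hx] at hz0; linarith
      obtain ⟨g1, hfg1, hg1⟩ := extract_left hz1 hz0 hf
      have hg1z' : g1.eval z' = 0 := by
        have h1 : f.eval z' = (z' - z) * g1.eval z' := by rw [hfg1]; simp
        have h2 : z' - z ≠ 0 := sub_ne_zero.mpr (Ne.symm hzz')
        rw [hz'0] at h1
        rcases mul_eq_zero.mp h1.symm with h | h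
        · exact absurd h h2
        · exact h
      obtain ⟨g, hg1g, hg⟩ := extract_left hz'1 hg1z' hg1
      have hfeq : f = ((X - C z) * (X - C z')) * g := by rw [hfg1, hg1g]; ring
      have hg0 : g ≠ 0 := by rintro rfl; rw [mul_zero] at hfeq; exact hfne hfeq
      have hdeg : f.natDegree = 2 + g.natDegree := by
        rw [hfeq, natDegree_mul (mul_ne_zero (X_sub_C_ne_zero z) (X_sub_C_ne_zero z')) hg0,
          natDegree_mul (X_sub_C_ne_zero z) (X_sub_C_ne_zero z'), natDegree_X_sub_C,
          natDegree_X_sub_C]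
      have hB0 : 0 ≤ -1 - z := by linarith
      have hB'0 : 0 ≤ -1 - z' := by linarith
      set v₀ : Polynomial ℝ := C ((-1-z) * (-1-z')) + (1 + X) ^ 2
          + C (((-1-z) + (-1-z')) / 2) * (1 + X) ^ 2 with hv₀
      have hvsos : IsSumSq v₀ := by
        refine IsSumSq.add (IsSumSq.add (isSumSq_C (by positivity)) (isSumSq_sq _)) ?_
        exact isSumSq_C_mul_sq (by positivity) _
      have h1X : (1 + X : Polynomial ℝ).natDegree ≤ 1 := le_trans (natDegree_add_le _ _) (by simp)
      have hv2 : v₀.natDegree ≤ 2 := by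
        rw [hv₀]
        apply le_trans (natDegree_add_le _ _)
        apply max_le
        · apply le_trans (natDegree_add_le _ _)
          apply max_le (le_of_eq_of_le (natDegree_C _) (by omega))
          apply le_trans (natDegree_pow_le); omega
        · apply le_trans (natDegree_C_mul_le _ _)
          apply le_trans (natDegree_pow_le); omega
      have hcc : (0:ℝ) ≤ ((-1-z) + (-1-z')) / 2 := by positivity
      have hFv : (X - C z) * (X - C z') = v₀ + C (((-1-z) + (-1-z')) / 2) * (1 - X ^ 2) := by
        apply Polynomial.funext
        intro r
        rw [hv₀]
        simp only [eval_add, eval_mul, eval_sub, eval_pow, eval_C, eval_X, eval_one]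
        ring
      obtain ⟨τ₀, τ₁, ht0, ht1, hgrep, hM0, hM1⟩ := IH g.natDegree (by omega) g le_rfl hg
      obtain ⟨σ₀, σ₁, hs0, hs1, hseq, hb0, hb1⟩ := prod_rep hcc hvsos hv2 ht0 ht1 hM0 hM1
      refine ⟨σ₀, σ₁, hs0, hs1, ?_, ?_, ?_⟩
      · rw [hfeq, hgrep, hFv]
        exact hseq
      · have : myE g.natDegree + 2 = myE f.natDegree := by simp only [myE]; omega
        omega
      · have : myE g.natDegree + 2 = myE f.natDegree := by simp only [myE]; omega
        omega
    · -- odd degree : one root ≤ -1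
      obtain ⟨g, hfeq, hg⟩ := extract_left hz1 hz0 hf
      have hg0 : g ≠ 0 := by rintro rfl; rw [mul_zero] at hfeq; exact hfne hfeq
      have hdeg : f.natDegree = 1 + g.natDegree := by
        rw [hfeq, natDegree_mul (X_sub_C_ne_zero z) hg0, natDegree_X_sub_C]
      have hpar : f.natDegree % 2 = 1 := Nat.odd_iff.mp hodd
      set v₀ : Polynomial ℝ := C (-1 - z) + C (1/2) * (1 + X) ^ 2 with hv₀
      have hvsos : IsSumSq v₀ :=
        IsSumSq.add (isSumSq_C (by linarith)) (isSumSq_C_mul_sq (by norm_num) _)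
      have h1X : (1 + X : Polynomial ℝ).natDegree ≤ 1 := le_trans (natDegree_add_le _ _) (by simp)
      have hv2 : v₀.natDegree ≤ 2 := by
        rw [hv₀]
        apply le_trans (natDegree_add_le _ _)
        apply max_le (le_of_eq_of_le (natDegree_C _) (by omega))
        apply le_trans (natDegree_C_mul_le _ _)
        apply le_trans (natDegree_pow_le); omega
      have hcc : (0:ℝ) ≤ 1/2 := by norm_num
      have hFv : (X - C z) = v₀ + C (1/2) * (1 - X ^ 2) := by
        apply Polynomial.funext
        intro r
        rw [hv₀]
        simp only [eval_add, eval_mul, eval_sub, eval_pow, eval_C, eval_X, eval_one]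
        ring
      obtain ⟨τ₀, τ₁, ht0, ht1, hgrep, hM0, hM1⟩ := IH g.natDegree (by omega) g le_rfl hg
      obtain ⟨σ₀, σ₁, hs0, hs1, hseq, hb0, hb1⟩ := prod_rep hcc hvsos hv2 ht0 ht1 hM0 hM1
      refine ⟨σ₀, σ₁, hs0, hs1, ?_, ?_, ?_⟩
      · rw [hfeq, hgrep, hFv]
        exact hseq
      · have : myE g.natDegree + 2 = myE f.natDegree := by simp only [myE]; omega
        omega
      · have : myE g.natDegree + 2 = myE f.natDegree := by simp only [myE]; omega
        omega

lemma rot (P Q A α : ℝ) (hα : 0 ≤ α) (h : P^2 + Q^2 = A^2 + α) :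
    ∃ cs sn : ℝ, cs^2 + sn^2 = 1 ∧ cs*P - sn*Q = A := by
  by_cases hN : A^2 + α = 0
  · have hA : A = 0 := by nlinarith
    have hP : P = 0 := by nlinarith
    have hQ : Q = 0 := by nlinarith
    exact ⟨1, 0, by norm_num, by rw [hA, hP, hQ]; ring⟩
  · have hNpos : 0 < A^2 + α := lt_of_le_of_ne (by positivity) (Ne.symm hN)
    have hw : Real.sqrt α ^ 2 = α := Real.sq_sqrt hα
    refine ⟨(A*P + Real.sqrt α * Q)/(A^2+α), (Real.sqrt α * P - A*Q)/(A^2+α), ?_, ?_⟩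
    · field_simp
      linear_combination (P^2+Q^2) * hw + (A^2 + α) * h
    · field_simp
      linear_combination A * h

lemma split : ∀ (k : ℕ) (a b : Fin k → ℝ) (p q σ : Polynomial ℝ), IsSumSq σ →
    (p.eval (-1))^2 + (q.eval (-1))^2 = ∑ i, (a i)^2 →
    (p.eval 1)^2 + (q.eval 1)^2 = ∑ i, (b i)^2 →
    ∃ (s : Fin k → Polynomial ℝ) (p' q' σ' : Polynomial ℝ), IsSumSq σ' ∧
      p^2 + q^2 + σ * (1 - X^2) = (∑ i, (s i)^2) + p'^2 + q'^2 + σ' * (1 - X^2) ∧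
      (∀ i, (s i).eval (-1) = a i ∧ (s i).eval 1 = b i) ∧
      p'.eval (-1) = 0 ∧ p'.eval 1 = 0 ∧ q'.eval (-1) = 0 ∧ q'.eval 1 = 0 ∧
      p'.natDegree ≤ max p.natDegree q.natDegree + k ∧
      q'.natDegree ≤ max p.natDegree q.natDegree + k ∧
      σ'.natDegree ≤ max σ.natDegree (2 * (max p.natDegree q.natDegree + k)) ∧
      (∀ i, (s i).natDegree ≤ max p.natDegree q.natDegree + k) := by
  intro k
  induction k with
  | zero =>
    intro a b p q σ hσ hma hmb
    simp only [Finset.univ_eq_empty, Finset.sum_empty] at hma hmb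
    refine ⟨fun i => i.elim0, p, q, σ, hσ, by simp, fun i => i.elim0, ?_, ?_, ?_, ?_,
      by omega, by omega, le_max_left _ _, fun i => i.elim0⟩
    · nlinarith [sq_nonneg (p.eval (-1)), sq_nonneg (q.eval (-1))]
    · nlinarith [sq_nonneg (p.eval 1), sq_nonneg (q.eval 1)]
    · nlinarith [sq_nonneg (p.eval (-1)), sq_nonneg (q.eval (-1))]
    · nlinarith [sq_nonneg (p.eval 1), sq_nonneg (q.eval 1)]
  | succ k IHk =>
    intro a b p q σ hσ hma hmb
    rw [Fin.sum_univ_succ] at hma hmb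
    obtain ⟨c₁, s₁, hcs₁, hrot₁⟩ := rot (p.eval (-1)) (q.eval (-1)) (a 0)
      (∑ i : Fin k, (a i.succ)^2) (by positivity) (by rw [hma])
    obtain ⟨c₂, s₂, hcs₂, hrot₂⟩ := rot (p.eval 1) (q.eval 1) (b 0)
      (∑ i : Fin k, (b i.succ)^2) (by positivity) (by rw [hmb])
    set u : Polynomial ℝ := C c₁ * p - C s₁ * q with hu
    set v : Polynomial ℝ := C c₂ * p - C s₂ * q with hv
    set u' : Polynomial ℝ := C s₁ * p + C c₁ * q with hu'
    set v' : Polynomial ℝ := C s₂ * p + C c₂ * q with hv'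
    set s0 : Polynomial ℝ := C (2⁻¹ : ℝ) * ((1 - X) * u + (1 + X) * v) with hs0
    set p1 : Polynomial ℝ := C (2⁻¹ : ℝ) * ((1 - X) * u') with hp1
    set q1 : Polynomial ℝ := C (2⁻¹ : ℝ) * ((1 + X) * v') with hq1
    set σ1 : Polynomial ℝ := σ + C (4⁻¹ : ℝ) * ((u - v)^2 + u'^2 + v'^2) with hσ1
    have hσ1sos : IsSumSq σ1 := by
      apply IsSumSq.add hσ
      apply isSumSq_Cmul (by norm_num)
      exact IsSumSq.add (IsSumSq.add (isSumSq_sq _) (isSumSq_sq _)) (isSumSq_sq _)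
    -- the key algebraic identity
    have hkey : p^2 + q^2 + σ * (1 - X^2) = s0^2 + (p1^2 + q1^2 + σ1 * (1 - X^2)) := by
      apply Polynomial.funext
      intro r
      simp only [hs0, hp1, hq1, hσ1, hu, hv, hu', hv', eval_add, eval_mul, eval_sub, eval_pow,
        eval_C, eval_X, eval_one]
      linear_combination (-(((1:ℝ) - r)/2 * (eval r p ^2 + eval r q ^2))) * hcs₁ +
        (-(((1:ℝ) + r)/2 * (eval r p ^2 + eval r q ^2))) * hcs₂
    -- endpoint values
    have hs0m : s0.eval (-1) = a 0 := by
      simp only [hs0, hu, hv, eval_mul, eval_add, eval_sub, eval_C, eval_X, eval_one]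
      linear_combination hrot₁
    have hs0p : s0.eval 1 = b 0 := by
      simp only [hs0, hu, hv, eval_mul, eval_add, eval_sub, eval_C, eval_X, eval_one]
      linear_combination hrot₂
    have hp1m : p1.eval (-1) = u'.eval (-1) := by
      simp only [hp1, eval_mul, eval_sub, eval_C, eval_X, eval_one]; ring
    have hp1p : p1.eval 1 = 0 := by
      simp only [hp1, eval_mul, eval_sub, eval_C, eval_X, eval_one]; ring
    have hq1m : q1.eval (-1) = 0 := by
      simp only [hq1, eval_mul, eval_add, eval_C, eval_X, eval_one]; ring
    have hq1p : q1.eval 1 = v'.eval 1 := by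
      simp only [hq1, eval_mul, eval_add, eval_C, eval_X, eval_one]; ring
    have hinvm : (p1.eval (-1))^2 + (q1.eval (-1))^2 = ∑ i, ((a ∘ Fin.succ) i)^2 := by
      rw [hp1m, hq1m]
      have hue : u'.eval (-1) = s₁ * p.eval (-1) + c₁ * q.eval (-1) := by
        simp [hu']
      rw [hue]
      simp only [Function.comp]
      linear_combination (eval (-1) p ^ 2 + eval (-1) q ^ 2) * hcs₁ + hma
        - (c₁ * eval (-1) p - s₁ * eval (-1) q + a 0) * hrot₁
    have hinvp : (p1.eval 1)^2 + (q1.eval 1)^2 = ∑ i, ((b ∘ Fin.succ) i)^2 := by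
      rw [hp1p, hq1p]
      have hve : v'.eval 1 = s₂ * p.eval 1 + c₂ * q.eval 1 := by simp [hv']
      rw [hve]
      simp only [Function.comp]
      linear_combination (eval 1 p ^ 2 + eval 1 q ^ 2) * hcs₂ + hmb
        - (c₂ * eval 1 p - s₂ * eval 1 q + b 0) * hrot₂
    obtain ⟨st, p', q', σ', hσ's, heq, hbv, hpm, hpp, hqm, hqp, hdp, hdq, hdσ, hds⟩ :=
      IHk (a ∘ Fin.succ) (b ∘ Fin.succ) p1 q1 σ1 hσ1sos hinvm hinvp
    -- degree bookkeeping
    set m := max p.natDegree q.natDegree with hm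
    have hdu : u.natDegree ≤ m := le_trans (natDegree_sub_le _ _)
      (max_le (le_trans (natDegree_C_mul_le _ _) (le_max_left _ _))
        (le_trans (natDegree_C_mul_le _ _) (le_max_right _ _)))
    have hdv : v.natDegree ≤ m := le_trans (natDegree_sub_le _ _)
      (max_le (le_trans (natDegree_C_mul_le _ _) (le_max_left _ _))
        (le_trans (natDegree_C_mul_le _ _) (le_max_right _ _)))
    have hdu' : u'.natDegree ≤ m := le_trans (natDegree_add_le _ _)
      (max_le (le_trans (natDegree_C_mul_le _ _) (le_max_left _ _))
        (le_trans (natDegree_C_mul_le _ _) (le_max_right _ _)))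
    have hdv' : v'.natDegree ≤ m := le_trans (natDegree_add_le _ _)
      (max_le (le_trans (natDegree_C_mul_le _ _) (le_max_left _ _))
        (le_trans (natDegree_C_mul_le _ _) (le_max_right _ _)))
    have h1mX : (1 - X : Polynomial ℝ).natDegree ≤ 1 := le_trans (natDegree_sub_le _ _) (by simp)
    have h1pX : (1 + X : Polynomial ℝ).natDegree ≤ 1 := le_trans (natDegree_add_le _ _) (by simp)
    have hds0 : s0.natDegree ≤ m + 1 := by
      apply le_trans (natDegree_C_mul_le _ _)
      apply le_trans (natDegree_add_le _ _)
      apply max_le <;> · apply le_trans (natDegree_mul_le) ; omega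
    have hdp1 : p1.natDegree ≤ m + 1 := by
      apply le_trans (natDegree_C_mul_le _ _)
      apply le_trans (natDegree_mul_le); omega
    have hdq1 : q1.natDegree ≤ m + 1 := by
      apply le_trans (natDegree_C_mul_le _ _)
      apply le_trans (natDegree_mul_le); omega
    have hm1 : max p1.natDegree q1.natDegree ≤ m + 1 := max_le hdp1 hdq1
    have hdσ1 : σ1.natDegree ≤ max σ.natDegree (2 * m) := by
      have e1 : ((u-v)^2).natDegree ≤ 2 * m := by
        apply le_trans (natDegree_pow_le)
        have : (u - v).natDegree ≤ m := le_trans (natDegree_sub_le _ _) (max_le hdu hdv)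
        omega
      have e2 : (u'^2).natDegree ≤ 2 * m := by
        apply le_trans (natDegree_pow_le); omega
      have e3 : (v'^2).natDegree ≤ 2 * m := by
        apply le_trans (natDegree_pow_le); omega
      have e4 : ((u-v)^2 + u'^2 + v'^2).natDegree ≤ 2*m :=
        le_trans (natDegree_add_le _ _)
          (max_le (le_trans (natDegree_add_le _ _) (max_le e1 e2)) e3)
      apply le_trans (natDegree_add_le _ _)
      apply max_le (le_max_left _ _)
      apply le_trans (natDegree_C_mul_le _ _)
      exact le_trans e4 (le_max_right _ _)
    refine ⟨Fin.cons s0 st, p', q', σ', hσ's, ?_, ?_, hpm, hpp, hqm, hqp, ?_, ?_, ?_, ?_⟩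
    · rw [hkey, heq, Fin.sum_univ_succ]
      simp only [Fin.cons_zero, Fin.cons_succ]
      ring
    · intro i
      refine Fin.cases ?_ ?_ i
      · simpa using ⟨hs0m, hs0p⟩
      · intro j
        simpa using hbv j
    · omega
    · omega
    · refine le_trans hdσ (max_le ?_ ?_)
      · refine le_trans hdσ1 (max_le (le_max_left _ _) ?_)
        apply le_trans _ (le_max_right _ _)
        omega
      · apply le_trans _ (le_max_right _ _)
        omega
    · intro i
      refine Fin.cases ?_ ?_ i
      · simpa using le_trans hds0 (by omega)
      · intro j
        simpa using le_trans (hds j) (by omega)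

end AuxStmt3

/-- Adapted sums of squares with prescribed boundary values: `f ≥ 0` on `[-1,1]`,
`f(-1) = ‖a‖²`, `f(1) = ‖b‖²`, then `f = Σ_{i<k+2} sᵢ² + r(1-t²)` with prescribed
boundary values for the first `k` polynomials, vanishing of the last two, and degree bounds. -/
theorem stmt3 (f : Polynomial ℝ) (hf : ∀ x ∈ Set.Icc (-1 : ℝ) 1, 0 ≤ f.eval x)
    (k : ℕ) (a b : Fin k → ℝ)
    (ha : f.eval (-1) = ∑ i, (a i) ^ 2) (hb : f.eval 1 = ∑ i, (b i) ^ 2) :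
    ∃ (s : Fin (k + 2) → Polynomial ℝ) (r : Polynomial ℝ),
      IsSumSq r ∧
      f = (∑ i, (s i) ^ 2) + r * (1 - X ^ 2) ∧
      (∀ i : Fin k, (s (Fin.castLE (by omega) i)).eval (-1) = a i ∧
                    (s (Fin.castLE (by omega) i)).eval 1 = b i) ∧
      (s ⟨k, by omega⟩).eval (-1) = 0 ∧ (s ⟨k, by omega⟩).eval 1 = 0 ∧
      (s ⟨k + 1, by omega⟩).eval (-1) = 0 ∧ (s ⟨k + 1, by omega⟩).eval 1 = 0 ∧
      r.natDegree ≤ f.natDegree + 3 * k + 1 ∧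
      ∀ i, ((s i) ^ 2).natDegree ≤ f.natDegree + 3 * k + 1 := by

  obtain ⟨σ₀, σ₁, hσ₀, hσ₁, hrep, hb0, hb1⟩ := lukacs_aux f.natDegree f le_rfl hf
  obtain ⟨p, q, hpq, hp2, hq2⟩ :=
    two_squares σ₀.natDegree σ₀ le_rfl (eval_nonneg_of_isSumSq hσ₀)
  have hEb : myE f.natDegree ≤ f.natDegree + 1 := by simp only [myE]; omega
  have hpa : (p.eval (-1))^2 + (q.eval (-1))^2 = ∑ i, (a i)^2 := by
    have h1 := congrArg (eval (-1)) hrep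
    rw [hpq] at h1
    simp only [eval_add, eval_mul, eval_sub, eval_pow, eval_one, eval_X] at h1
    rw [ha] at h1
    rw [h1]; ring
  have hpb : (p.eval 1)^2 + (q.eval 1)^2 = ∑ i, (b i)^2 := by
    have h1 := congrArg (eval 1) hrep
    rw [hpq] at h1
    simp only [eval_add, eval_mul, eval_sub, eval_pow, eval_one, eval_X] at h1
    rw [hb] at h1
    rw [h1]; ring
  obtain ⟨st, p', q', σ', hσ', heq, hbv, hpm, hpp, hqm, hqp, hdp, hdq, hdσ, hds⟩ :=
    split k a b p q σ₁ hσ₁ hpa hpb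
  set m := max p.natDegree q.natDegree with hm
  have hmb : 2 * m ≤ f.natDegree + 1 := by
    have : σ₀.natDegree ≤ f.natDegree + 1 := le_trans hb0 hEb
    omega
  have hσ₁d : σ₁.natDegree ≤ f.natDegree + 1 := by
    rcases eq_or_ne σ₁ 0 with rfl | hne
    · simp
    · have hW2 : (1 - X^2 : Polynomial ℝ).natDegree = 2 := by
        have : (1 - X^2 : Polynomial ℝ) = -(X^2 - C 1) := by rw [C_1]; ring
        rw [this, natDegree_neg, natDegree_X_pow_sub_C]
      have hWne : (1 - X^2 : Polynomial ℝ) ≠ 0 := fun h => by simp [h] at hW2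
      have := natDegree_mul hne hWne
      rw [hW2] at this
      omega
  -- define the full family
  set S : Fin (k+2) → Polynomial ℝ :=
    fun i => if h : (i : ℕ) < k then st ⟨i, h⟩ else if (i : ℕ) = k then p' else q' with hS
  have hSlt : ∀ (i : Fin k), S (Fin.castLE (by omega) i) = st i := by
    intro i
    have : ((Fin.castLE (by omega : k ≤ k + 2) i : Fin (k+2)) : ℕ) = (i : ℕ) := rfl
    simp only [hS, this, dif_pos i.isLt]
  have hSk : S ⟨k, by omega⟩ = p' := by
    simp [hS]
  have hSk1 : S ⟨k+1, by omega⟩ = q' := by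
    simp [hS]
  have hsum : ∑ i, (S i)^2 = (∑ i, (st i)^2) + p'^2 + q'^2 := by
    rw [Fin.sum_univ_castSucc, Fin.sum_univ_castSucc]
    have h1 : S (Fin.last (k+1)) = q' := by
      simp [hS, Fin.last]
    have h2 : S ((Fin.last k).castSucc) = p' := by
      simp [hS, Fin.last]
    have h3 : ∀ i : Fin k, S (i.castSucc.castSucc) = st i := by
      intro i
      simp only [hS]
      rw [dif_pos (by simpa using i.isLt)]
      exact congrArg st (Fin.ext (by simp))
    rw [h1, h2]
    congr 1
    congr 1
    apply Finset.sum_congr rfl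
    intro i _
    rw [h3 i]
  refine ⟨S, σ', hσ', ?_, ?_, ?_, ?_, ?_, ?_, ?_, ?_⟩
  · rw [hsum, hrep, hpq]
    calc p^2 + q^2 + σ₁ * (1 - X^2)
        = (∑ i, (st i)^2) + p'^2 + q'^2 + σ' * (1 - X^2) := heq
      _ = (∑ i, (st i)^2) + p'^2 + q'^2 + σ' * (1 - X^2) := rfl
  · intro i
    rw [hSlt i]
    exact hbv i
  · rw [hSk]; exact hpm
  · rw [hSk]; exact hpp
  · rw [hSk1]; exact hqm
  · rw [hSk1]; exact hqp
  · refine le_trans hdσ (max_le ?_ ?_) <;> omega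
  · intro i
    have hdSi : (S i).natDegree ≤ m + k := by
      simp only [hS]
      by_cases h : (i : ℕ) < k
      · rw [dif_pos h]; exact hds _
      · rw [dif_neg h]
        by_cases h2 : (i : ℕ) = k
        · rw [if_pos h2]; exact hdp
        · rw [if_neg h2]; exact hdq
    have := natDegree_pow_le (p := S i) (n := 2)
    omega
end

section
/- For a polynomial f ∈ ℝ[t] non-negative on [-1,1], there is a representation f = r₀ + r₁(1+t) + r₂(1-t) + r₃(1-t²) with each rᵢ a sum of squares and the degree of each summand bounded by deg(f), and substituting (1±t) = ½(1±t)² + ½(1-t²) yields a representation f = s₀ + s₁(1-t²) with s₀, s₁ sums of squares, deg(s₀) ≤ deg(f)+1, deg(s₁(1-t²)) ≤ deg(f)+1. -/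
open Polynomial Set Filter Topology

namespace KMS

variable {R : Type*} [CommRing R]

lemma isSumSq_mul_self_mul (x : R) {S : R} (h : IsSumSq S) : IsSumSq (x * x * S) := by
  induction h with
  | zero => simpa using IsSumSq.zero
  | @sq_add a S pS ih =>
    have e : x * x * (a * a + S) = (x * a) * (x * a) + x * x * S := by ring
    rw [e]; exact IsSumSq.sq_add _ ih

lemma ssMul {a b : R} (ha : IsSumSq a) (hb : IsSumSq b) : IsSumSq (a * b) := by
  induction ha with
  | zero => simpa using IsSumSq.zero
  | @sq_add x S pS ih =>
    have e : (x * x + S) * b = x * x * b + S * b := by ring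
    rw [e]; exact (isSumSq_mul_self_mul x hb).add ih

lemma isSumSq_mul_self (x : R) : IsSumSq (x * x) := by
  simpa using IsSumSq.sq_add x 0 IsSumSq.zero

lemma isSumSq_one : IsSumSq (1 : R) := by simpa using isSumSq_mul_self (1 : R)

/-- Membership in the preordering generated by `1+X`, `1-X` with degree bound `n`. -/
def Rep (n : ℕ) (f : ℝ[X]) : Prop :=
  ∃ r₀ r₁ r₂ r₃ : Polynomial ℝ,
    IsSumSq r₀ ∧ IsSumSq r₁ ∧ IsSumSq r₂ ∧ IsSumSq r₃ ∧
    f = r₀ + r₁ * (1 + X) + r₂ * (1 - X) + r₃ * (1 - X ^ 2) ∧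
    r₀.natDegree ≤ n ∧
    (r₁ * (1 + X)).natDegree ≤ n ∧
    (r₂ * (1 - X)).natDegree ≤ n ∧
    (r₃ * (1 - X ^ 2)).natDegree ≤ n

lemma nd_le {p q : ℝ[X]} {k : ℕ} (h : p = q) (hq : q.natDegree ≤ k) : p.natDegree ≤ k :=
  h ▸ hq

lemma mulb {p q : ℝ[X]} {m k : ℕ} (hp : p.natDegree ≤ m) (hq : q.natDegree ≤ k) :
    (p * q).natDegree ≤ m + k :=
  natDegree_mul_le.trans (add_le_add hp hq)

lemma nd_add4 {a b c d : ℝ[X]} {m : ℕ} (ha : a.natDegree ≤ m) (hb : b.natDegree ≤ m)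
    (hc : c.natDegree ≤ m) (hd : d.natDegree ≤ m) : (a + b + c + d).natDegree ≤ m :=
  natDegree_add_le_of_degree_le (natDegree_add_le_of_degree_le
    (natDegree_add_le_of_degree_le ha hb) hc) hd

lemma Rep.mono {n m : ℕ} {f : ℝ[X]} (h : Rep n f) (hnm : n ≤ m) : Rep m f := by
  obtain ⟨r₀, r₁, r₂, r₃, h0, h1, h2, h3, he, b0, b1, b2, b3⟩ := h
  exact ⟨r₀, r₁, r₂, r₃, h0, h1, h2, h3, he, b0.trans hnm, b1.trans hnm, b2.trans hnm,
    b3.trans hnm⟩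

lemma rep_sq {p : ℝ[X]} {m : ℕ} (hp : IsSumSq p) (hm : p.natDegree ≤ m) : Rep m p := by
  refine ⟨p, 0, 0, 0, hp, IsSumSq.zero, IsSumSq.zero, IsSumSq.zero, by ring, hm, ?_, ?_, ?_⟩ <;>
    simp

lemma rep_C {c : ℝ} (hc : 0 ≤ c) : Rep 0 (C c) := by
  refine rep_sq ?_ (natDegree_C c).le
  have : (C c : ℝ[X]) = C (Real.sqrt c) * C (Real.sqrt c) := by
    rw [← C_mul, Real.mul_self_sqrt hc]
  rw [this]; exact isSumSq_mul_self _

lemma rep_upper {a : ℝ} (ha : 1 ≤ a) : Rep 1 (C a - X) := by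
  refine ⟨C (a - 1), 0, 1, 0, ?_, IsSumSq.zero, isSumSq_one, IsSumSq.zero, ?_, ?_, ?_, ?_, ?_⟩
  · have : (C (a - 1) : ℝ[X]) = C (Real.sqrt (a - 1)) * C (Real.sqrt (a - 1)) := by
      rw [← C_mul, Real.mul_self_sqrt (by linarith)]
    rw [this]; exact isSumSq_mul_self _
  · rw [C_sub, C_1]; ring
  · exact (natDegree_C _).le.trans zero_le_one
  · simp
  · refine nd_le (by ring) (?_ : (1 - X : ℝ[X]).natDegree ≤ 1); compute_degree
  · simp

lemma rep_lower {a : ℝ} (ha : a ≤ -1) : Rep 1 (X - C a) := by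
  refine ⟨C (-1 - a), 1, 0, 0, ?_, isSumSq_one, IsSumSq.zero, IsSumSq.zero, ?_, ?_, ?_, ?_, ?_⟩
  · have : (C (-1 - a) : ℝ[X]) = C (Real.sqrt (-1 - a)) * C (Real.sqrt (-1 - a)) := by
      rw [← C_mul, Real.mul_self_sqrt (by linarith)]
    rw [this]; exact isSumSq_mul_self _
  · rw [C_sub, map_neg, C_1]; ring
  · exact (natDegree_C _).le.trans zero_le_one
  · refine nd_le (by ring) (?_ : (1 + X : ℝ[X]).natDegree ≤ 1); compute_degree
  · simp
  · simp

lemma Rep.mul {d e : ℕ} {f g : ℝ[X]} (hf : Rep d f) (hg : Rep e g) : Rep (d + e) (f * g) := by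
  obtain ⟨r₀, r₁, r₂, r₃, h0, h1, h2, h3, he, b0, b1, b2, b3⟩ := hf
  obtain ⟨s₀, s₁, s₂, s₃, k0, k1, k2, k3, ke, c0, c1, c2, c3⟩ := hg
  refine ⟨r₀ * s₀ + ((1 + X) * (1 + X)) * (r₁ * s₁) + ((1 - X) * (1 - X)) * (r₂ * s₂)
      + ((1 - X ^ 2) * (1 - X ^ 2)) * (r₃ * s₃),
    r₀ * s₁ + r₁ * s₀ + ((1 - X) * (1 - X)) * (r₂ * s₃) + ((1 - X) * (1 - X)) * (r₃ * s₂),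
    r₀ * s₂ + r₂ * s₀ + ((1 + X) * (1 + X)) * (r₁ * s₃) + ((1 + X) * (1 + X)) * (r₃ * s₁),
    r₀ * s₃ + r₃ * s₀ + r₁ * s₂ + r₂ * s₁, ?_, ?_, ?_, ?_, ?_, ?_, ?_, ?_, ?_⟩
  · exact (((ssMul h0 k0).add (isSumSq_mul_self_mul _ (ssMul h1 k1))).add
      (isSumSq_mul_self_mul _ (ssMul h2 k2))).add (isSumSq_mul_self_mul _ (ssMul h3 k3))
  · exact (((ssMul h0 k1).add (ssMul h1 k0)).add (isSumSq_mul_self_mul _ (ssMul h2 k3))).add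
      (isSumSq_mul_self_mul _ (ssMul h3 k2))
  · exact (((ssMul h0 k2).add (ssMul h2 k0)).add (isSumSq_mul_self_mul _ (ssMul h1 k3))).add
      (isSumSq_mul_self_mul _ (ssMul h3 k1))
  · exact (((ssMul h0 k3).add (ssMul h3 k0)).add (ssMul h1 k2)).add (ssMul h2 k1)
  · rw [he, ke]; ring
  · exact nd_add4 (mulb b0 c0)
      (nd_le (by ring) (mulb b1 c1))
      (nd_le (by ring) (mulb b2 c2))
      (nd_le (by ring) (mulb b3 c3))
  · refine nd_le (show _ = r₀ * (s₁ * (1 + X)) + (r₁ * (1 + X)) * s₀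
        + (r₂ * (1 - X)) * (s₃ * (1 - X ^ 2)) + (r₃ * (1 - X ^ 2)) * (s₂ * (1 - X)) by ring) ?_
    exact nd_add4 (mulb b0 c1) (mulb b1 c0) (mulb b2 c3) (mulb b3 c2)
  · refine nd_le (show _ = r₀ * (s₂ * (1 - X)) + (r₂ * (1 - X)) * s₀
        + (r₁ * (1 + X)) * (s₃ * (1 - X ^ 2)) + (r₃ * (1 - X ^ 2)) * (s₁ * (1 + X)) by ring) ?_
    exact nd_add4 (mulb b0 c2) (mulb b2 c0) (mulb b1 c3) (mulb b3 c1)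
  · refine nd_le (show _ = r₀ * (s₃ * (1 - X ^ 2)) + (r₃ * (1 - X ^ 2)) * s₀
        + (r₁ * (1 + X)) * (s₂ * (1 - X)) + (r₂ * (1 - X)) * (s₁ * (1 + X)) by ring) ?_
    exact nd_add4 (mulb b0 c3) (mulb b3 c0) (mulb b1 c2) (mulb b2 c1)


lemma nonneg_of_closure {p : ℝ[X]} {s : Set ℝ} (h : ∀ x ∈ s, 0 ≤ p.eval x)
    {x : ℝ} (hx : x ∈ closure s) : 0 ≤ p.eval x := by
  have hcl : closure s ⊆ {y : ℝ | 0 ≤ p.eval y} :=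
    closure_minimal h (isClosed_le continuous_const p.continuous)
  exact hcl hx

lemma Icc_subset_closure_diff (a : ℝ) :
    Icc (-1 : ℝ) 1 ⊆ closure (Icc (-1 : ℝ) 1 \ {a}) := by
  intro x hx
  by_cases hxa : x = a
  · subst hxa
    rcases lt_or_eq_of_le hx.2 with h1 | h1
    · have hsub : Ioo x 1 ⊆ Icc (-1 : ℝ) 1 \ {x} := fun y hy =>
        ⟨⟨le_trans hx.1 hy.1.le, hy.2.le⟩, ne_of_gt hy.1⟩
      have : x ∈ closure (Ioo x 1) := by
        rw [closure_Ioo (ne_of_lt h1)]; exact ⟨le_refl x, h1.le⟩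
      exact closure_mono hsub this
    · have h2 : (-1 : ℝ) < x := by rw [h1]; norm_num
      have hsub : Ioo (-1 : ℝ) x ⊆ Icc (-1 : ℝ) 1 \ {x} := fun y hy =>
        ⟨⟨hy.1.le, le_trans hy.2.le hx.2⟩, ne_of_lt hy.2⟩
      have : x ∈ closure (Ioo (-1 : ℝ) x) := by
        rw [closure_Ioo (ne_of_lt h2)]; exact ⟨h2.le, le_refl x⟩
      exact closure_mono hsub this
  · exact subset_closure ⟨hx, hxa⟩

lemma nn_quot {a b : ℝ} (h : 0 ≤ a * b) (ha : 0 < a) : 0 ≤ b := by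
  by_contra hb
  push_neg at hb
  exact absurd h (not_le.mpr (mul_neg_of_pos_of_neg ha hb))

lemma interior_root {f g : ℝ[X]} {a : ℝ} (ha1 : -1 < a) (ha2 : a < 1)
    (hf : ∀ x ∈ Icc (-1 : ℝ) 1, 0 ≤ f.eval x) (hfg : f = (X - C a) * g) :
    g.eval a = 0 := by
  by_contra hg
  rcases lt_or_gt_of_ne hg with hneg | hpos
  · have h1 : ∀ᶠ x in 𝓝[>] a, g.eval x < 0 :=
      eventually_nhdsWithin_of_eventually_nhds
        ((g.continuous.tendsto a).eventually_lt_const hneg)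
    have h2 : ∀ᶠ x in 𝓝[>] a, x ∈ Ioo a (1 : ℝ) :=
      Filter.eventually_of_mem (Ioo_mem_nhdsGT_of_mem ⟨le_refl a, ha2⟩) fun x hx => hx
    obtain ⟨x, hxg, hxI⟩ := (h1.and h2).exists
    have hmem : x ∈ Icc (-1 : ℝ) 1 := ⟨le_trans ha1.le hxI.1.le, hxI.2.le⟩
    have h0 := hf x hmem
    rw [hfg] at h0
    simp only [eval_mul, eval_sub, eval_X, eval_C] at h0
    nlinarith [sub_pos.mpr hxI.1]
  · have h1 : ∀ᶠ x in 𝓝[<] a, 0 < g.eval x :=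
      eventually_nhdsWithin_of_eventually_nhds
        ((g.continuous.tendsto a).eventually_const_lt hpos)
    have h2 : ∀ᶠ x in 𝓝[<] a, x ∈ Ioo (-1 : ℝ) a :=
      Filter.eventually_of_mem (Ioo_mem_nhdsLT_of_mem ⟨ha1, le_refl a⟩) fun x hx => hx
    obtain ⟨x, hxg, hxI⟩ := (h1.and h2).exists
    have hmem : x ∈ Icc (-1 : ℝ) 1 := ⟨hxI.1.le, le_trans hxI.2.le ha2.le⟩
    have h0 := hf x hmem
    rw [hfg] at h0
    simp only [eval_mul, eval_sub, eval_X, eval_C] at h0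
    nlinarith [sub_neg.mpr hxI.2]

lemma rep_of_C {f : ℝ[X]} (h0 : f.natDegree = 0)
    (hf : ∀ x ∈ Icc (-1 : ℝ) 1, 0 ≤ f.eval x) : Rep f.natDegree f := by
  have hc : f = C (f.coeff 0) := eq_C_of_natDegree_eq_zero h0
  have hnn : 0 ≤ f.coeff 0 := by
    have h1 := hf 0 (by constructor <;> norm_num)
    rw [hc] at h1
    simpa using h1
  have h := rep_C hnn
  rw [← hc] at h
  rw [h0]; exact h

lemma main : ∀ n : ℕ, ∀ f : ℝ[X], f.natDegree ≤ n →
    (∀ x ∈ Icc (-1 : ℝ) 1, 0 ≤ f.eval x) → Rep f.natDegree f := by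
  intro n
  induction n with
  | zero => intro f hd hf; exact rep_of_C (Nat.le_zero.mp hd) hf
  | succ n ih =>
    intro f hd hf
    by_cases hf0 : f = 0
    · subst hf0; exact rep_sq IsSumSq.zero (by simp)
    by_cases hd0 : f.natDegree = 0
    · exact rep_of_C hd0 hf
    have hdeg : f.degree ≠ 0 := by
      rw [degree_eq_natDegree hf0]
      exact_mod_cast fun h => hd0 (by exact_mod_cast h)
    obtain ⟨z, hz⟩ := IsAlgClosed.exists_aeval_eq_zero ℂ f hdeg
    by_cases him : z.im = 0
    · -- real root case
      lift z to ℝ using him with a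
      have ha : f.eval a = 0 := by
        erw [aeval_ofReal, RCLike.ofReal_eq_zero] at hz
        simpa [aeval_def, eval₂_eq_eval_map] using hz
      obtain ⟨g, hg⟩ := dvd_iff_isRoot.mpr ha
      have hgne : g ≠ 0 := fun hG => hf0 (by rw [hg, hG, mul_zero])
      by_cases hin : -1 < a ∧ a < 1
      · -- interior root: even multiplicity
        have hga : g.eval a = 0 := interior_root hin.1 hin.2 hf hg
        obtain ⟨h, hh⟩ := dvd_iff_isRoot.mpr hga
        have hfh : f = (X - C a) ^ 2 * h := by rw [hg, hh]; ring
        have hhne : h ≠ 0 := fun h0 => hf0 (by rw [hfh, h0, mul_zero])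
        have hq2 : ((X - C a) ^ 2 : ℝ[X]).natDegree = 2 := by
          rw [natDegree_pow, natDegree_X_sub_C]
        have hnd : f.natDegree = 2 + h.natDegree := by
          rw [hfh, natDegree_mul (pow_ne_zero _ (X_sub_C_ne_zero a)) hhne, hq2]
        have hhnn : ∀ x ∈ Icc (-1 : ℝ) 1, 0 ≤ h.eval x := by
          intro x hx
          refine nonneg_of_closure (s := Icc (-1 : ℝ) 1 \ {a}) ?_ (Icc_subset_closure_diff a hx)
          intro y hy
          have h0 := hf y hy.1
          rw [hfh] at h0
          simp only [eval_mul, eval_pow, eval_sub, eval_X, eval_C] at h0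
          refine nn_quot h0 ?_
          exact lt_of_le_of_ne (sq_nonneg _) (Ne.symm (pow_ne_zero 2 (sub_ne_zero.mpr hy.2)))
        have rep_h : Rep h.natDegree h := ih h (by omega) hhnn
        have rep_q : Rep 2 ((X - C a) ^ 2) := by
          refine rep_sq ?_ hq2.le
          rw [pow_two]; exact isSumSq_mul_self _
        rw [hnd, hfh]
        exact rep_q.mul rep_h
      · have hout : a ≤ -1 ∨ 1 ≤ a := by
          push_neg at hin
          rcases le_or_gt a (-1) with h1 | h1
          · exact Or.inl h1
          · exact Or.inr (hin h1)
        rcases hout with hlow | hhigh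
        · -- a ≤ -1 : f = (X - C a) * g with g ≥ 0 on Icc
          have hgd : f.natDegree = 1 + g.natDegree := by
            rw [hg, natDegree_mul (X_sub_C_ne_zero a) hgne, natDegree_X_sub_C]
          have hgnn : ∀ x ∈ Icc (-1 : ℝ) 1, 0 ≤ g.eval x := by
            intro x hx
            refine nonneg_of_closure (s := Icc (-1 : ℝ) 1 \ {a}) ?_
              (Icc_subset_closure_diff a hx)
            intro y hy
            have h0 := hf y hy.1
            rw [hg] at h0
            simp only [eval_mul, eval_sub, eval_X, eval_C] at h0
            refine nn_quot h0 ?_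
            have : a < y := lt_of_le_of_ne (le_trans hlow hy.1.1) (Ne.symm hy.2)
            linarith
          have rep_g : Rep g.natDegree g := ih g (by omega) hgnn
          rw [hgd, hg]
          exact (rep_lower hlow).mul rep_g
        · -- 1 ≤ a : f = (C a - X) * (-g) with -g ≥ 0 on Icc
          have hfg' : f = (C a - X) * (-g) := by rw [hg]; ring
          have hgne' : (-g) ≠ 0 := neg_ne_zero.mpr hgne
          have hCd : (C a - X : ℝ[X]).natDegree = 1 := by
            have he : (C a - X : ℝ[X]) = -(X - C a) := by ring
            rw [he, natDegree_neg, natDegree_X_sub_C]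
          have hgd : f.natDegree = 1 + (-g).natDegree := by
            have hCne : (C a - X : ℝ[X]) ≠ 0 := fun h0 => by rw [h0] at hCd; simp at hCd
            rw [hfg', natDegree_mul hCne hgne', hCd]
          have hgnn : ∀ x ∈ Icc (-1 : ℝ) 1, 0 ≤ (-g).eval x := by
            intro x hx
            refine nonneg_of_closure (s := Icc (-1 : ℝ) 1 \ {a}) ?_
              (Icc_subset_closure_diff a hx)
            intro y hy
            have h0 := hf y hy.1
            rw [hfg'] at h0
            simp only [eval_mul, eval_sub, eval_X, eval_C, eval_neg] at h0
            have hlt : y < a := lt_of_le_of_ne (le_trans hy.1.2 hhigh) hy.2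
            have h1 : (0 : ℝ) ≤ -g.eval y := nn_quot h0 (by linarith)
            simpa using h1
          have rep_g : Rep (-g).natDegree (-g) := ih (-g) (by omega) hgnn
          rw [hgd, hfg']
          exact (rep_upper hhigh).mul rep_g
    · -- complex root: positive-definite quadratic factor
      obtain ⟨h, hfq⟩ := f.quadratic_dvd_of_aeval_eq_zero_im_ne_zero hz him
      set q : ℝ[X] := X ^ 2 - C (2 * z.re) * X + C (‖z‖ ^ 2) with hq_def
      have hnorm : ‖z‖ ^ 2 = z.re * z.re + z.im * z.im := by
        rw [Complex.sq_norm, Complex.normSq_apply]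
      have hq_eq : q = (X - C z.re) * (X - C z.re) + (C z.im * C z.im + 0) := by
        rw [hq_def, hnorm]
        simp only [C_add, C_mul, map_ofNat]
        ring
      have hq2 : q.natDegree = 2 := by
        rw [hq_def]; compute_degree!
      have hqne : q ≠ 0 := fun h0 => by rw [h0] at hq2; simp at hq2
      have hqpos : ∀ x : ℝ, 0 < q.eval x := by
        intro x
        have h1 : 0 < z.im * z.im := mul_self_pos.mpr him
        rw [hq_def]
        simp only [eval_add, eval_sub, eval_mul, eval_pow, eval_X, eval_C]
        nlinarith [sq_nonneg (x - z.re)]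
      have hhne : h ≠ 0 := fun h0 => hf0 (by rw [hfq, h0, mul_zero])
      have hnd : f.natDegree = 2 + h.natDegree := by
        rw [hfq, natDegree_mul hqne hhne, hq2]
      have hhnn : ∀ x ∈ Icc (-1 : ℝ) 1, 0 ≤ h.eval x := by
        intro x hx
        have h0 := hf x hx
        rw [hfq, eval_mul] at h0
        exact nn_quot h0 (hqpos x)
      have rep_h : Rep h.natDegree h := ih h (by omega) hhnn
      have rep_q : Rep 2 q := by
        refine rep_sq ?_ hq2.le
        rw [hq_eq]
        exact IsSumSq.sq_add _ (IsSumSq.sq_add _ IsSumSq.zero)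
      rw [hnd, hfq]
      exact rep_q.mul rep_h

end KMS


open Polynomial

/-- KMS representation in the preordering generated by `1+t`, `1-t` with degree bounds,
and the derived representation in the quadratic module generated by `1-t²`. -/
theorem stmt6 (f : Polynomial ℝ) (hf : ∀ x ∈ Set.Icc (-1 : ℝ) 1, 0 ≤ f.eval x) :
    (∃ r₀ r₁ r₂ r₃ : Polynomial ℝ,
      IsSumSq r₀ ∧ IsSumSq r₁ ∧ IsSumSq r₂ ∧ IsSumSq r₃ ∧
      f = r₀ + r₁ * (1 + X) + r₂ * (1 - X) + r₃ * (1 - X ^ 2) ∧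
      r₀.natDegree ≤ f.natDegree ∧
      (r₁ * (1 + X)).natDegree ≤ f.natDegree ∧
      (r₂ * (1 - X)).natDegree ≤ f.natDegree ∧
      (r₃ * (1 - X ^ 2)).natDegree ≤ f.natDegree) ∧
    (∃ s₀ s₁ : Polynomial ℝ,
      IsSumSq s₀ ∧ IsSumSq s₁ ∧
      f = s₀ + s₁ * (1 - X ^ 2) ∧
      s₀.natDegree ≤ f.natDegree + 1 ∧
      (s₁ * (1 - X ^ 2)).natDegree ≤ f.natDegree + 1) := by
  obtain ⟨r₀, r₁, r₂, r₃, h0, h1, h2, h3, he, b0, b1, b2, b3⟩ :=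
    KMS.main f.natDegree f le_rfl hf
  refine ⟨⟨r₀, r₁, r₂, r₃, h0, h1, h2, h3, he, b0, b1, b2, b3⟩, ?_⟩
  set c : Polynomial ℝ := C (Real.sqrt (1 / 2)) with hc
  have hcc : c * c = C (1 / 2 : ℝ) := by
    rw [hc, ← C_mul, Real.mul_self_sqrt (by norm_num)]
  have hX1 : ((1 : Polynomial ℝ) + X).natDegree ≤ 1 := by compute_degree
  have hX1' : ((1 : Polynomial ℝ) - X).natDegree ≤ 1 := by compute_degree
  have hc0 : (c * c).natDegree ≤ 0 := KMS.mulb (natDegree_C _).le (natDegree_C _).le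
  refine ⟨r₀ + (c * (1 + X)) * (c * (1 + X)) * r₁ + (c * (1 - X)) * (c * (1 - X)) * r₂,
    r₃ + c * c * r₁ + c * c * r₂, ?_, ?_, ?_, ?_, ?_⟩
  · exact (h0.add (KMS.isSumSq_mul_self_mul _ h1)).add (KMS.isSumSq_mul_self_mul _ h2)
  · exact (h3.add (KMS.isSumSq_mul_self_mul _ h1)).add (KMS.isSumSq_mul_self_mul _ h2)
  · have hcc2 : c * c * 2 = 1 := by
      rw [hcc, ← map_ofNat (C : ℝ →+* Polynomial ℝ) 2, ← C_mul]
      norm_num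
    rw [he]
    linear_combination (-(r₁ * (1 + X)) - r₂ * (1 - X)) * hcc2
  · have ht1 : ((c * (1 + X)) * (c * (1 + X)) * r₁).natDegree ≤ f.natDegree + 1 := by
      refine KMS.nd_le (show _ = (c * c) * ((r₁ * (1 + X)) * (1 + X)) by ring) ?_
      simpa using KMS.mulb hc0 (KMS.mulb b1 hX1)
    have ht2 : ((c * (1 - X)) * (c * (1 - X)) * r₂).natDegree ≤ f.natDegree + 1 := by
      refine KMS.nd_le (show _ = (c * c) * ((r₂ * (1 - X)) * (1 - X)) by ring) ?_
      simpa using KMS.mulb hc0 (KMS.mulb b2 hX1')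
    exact natDegree_add_le_of_degree_le
      (natDegree_add_le_of_degree_le (b0.trans (Nat.le_succ _)) ht1) ht2
  · refine KMS.nd_le (show _ = r₃ * (1 - X ^ 2) + (c * c) * ((r₁ * (1 + X)) * (1 - X))
        + (c * c) * ((r₂ * (1 - X)) * (1 + X)) by ring) ?_
    refine natDegree_add_le_of_degree_le (natDegree_add_le_of_degree_le
      (b3.trans (Nat.le_succ _)) ?_) ?_
    · simpa using KMS.mulb hc0 (KMS.mulb b1 hX1')
    · simpa using KMS.mulb hc0 (KMS.mulb b2 hX1)
end

section
/- Let A be a commutative ring with elements T₁,…,T_m satisfying Σᵢ Tᵢ = 1, TᵢTⱼT_k = 0 for distinct i,j,k. Then the quadratic module M generated by T₁,…,T_m is closed under multiplication (i.e., M is a preordering). -/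
private lemma sq_mul_isSumSq {A : Type*} [CommRing A] (x : A) {b : A} (hb : IsSumSq b) :
    IsSumSq (x * x * b) := by
  induction hb with
  | zero => simpa using IsSumSq.zero
  | @sq_add y S hS ih =>
      have : x * x * (y * y + S) = (x * y) * (x * y) + x * x * S := by ring
      rw [this]
      exact IsSumSq.sq_add _ ih

private lemma isSumSq_mul {A : Type*} [CommRing A] {a b : A} (ha : IsSumSq a)
    (hb : IsSumSq b) : IsSumSq (a * b) := by
  induction ha with
  | zero => simpa using IsSumSq.zero
  | @sq_add x S hS ih =>
      have : (x * x + S) * b = x * x * b + S * b := by ring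
      rw [this]
      exact (sq_mul_isSumSq x hb).add ih

/-- The quadratic module generated by tent-like elements `T₁,…,T_m` (with `Σ Tᵢ = 1` and
vanishing triple products) is closed under multiplication, i.e. it is a preordering. -/
theorem stmt11 (A : Type*) [CommRing A] (m : ℕ) (T : Fin m → A)
    (hsum : ∑ i, T i = 1)
    (htriple : ∀ i j k : Fin m, i ≠ j → j ≠ k → i ≠ k → T i * T j * T k = 0)
    (M : Set A)
    (hM : M = {x : A | ∃ (s₀ : A) (s : Fin m → A),
      IsSumSq s₀ ∧ (∀ i, IsSumSq (s i)) ∧ x = s₀ + ∑ i, s i * T i}) :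
    ∀ x ∈ M, ∀ y ∈ M, x * y ∈ M := by
  subst hM
  -- basic closure properties
  have hzero : (0 : A) ∈ {x : A | ∃ (s₀ : A) (s : Fin m → A),
      IsSumSq s₀ ∧ (∀ i, IsSumSq (s i)) ∧ x = s₀ + ∑ i, s i * T i} := by
    exact ⟨0, fun _ => 0, IsSumSq.zero, fun _ => IsSumSq.zero, by simp⟩
  have hadd : ∀ a ∈ {x : A | ∃ (s₀ : A) (s : Fin m → A),
      IsSumSq s₀ ∧ (∀ i, IsSumSq (s i)) ∧ x = s₀ + ∑ i, s i * T i},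
      ∀ b ∈ {x : A | ∃ (s₀ : A) (s : Fin m → A),
      IsSumSq s₀ ∧ (∀ i, IsSumSq (s i)) ∧ x = s₀ + ∑ i, s i * T i},
      a + b ∈ {x : A | ∃ (s₀ : A) (s : Fin m → A),
      IsSumSq s₀ ∧ (∀ i, IsSumSq (s i)) ∧ x = s₀ + ∑ i, s i * T i} := by
    rintro a ⟨s₀, s, hs₀, hs, rfl⟩ b ⟨t₀, t, ht₀, ht, rfl⟩
    refine ⟨s₀ + t₀, fun i => s i + t i, hs₀.add ht₀, fun i => (hs i).add (ht i), ?_⟩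
    rw [Finset.sum_congr rfl (fun i _ => add_mul (s i) (t i) (T i)),
      Finset.sum_add_distrib]
    ring
  have hsmul : ∀ (σ : A), IsSumSq σ → ∀ a ∈ {x : A | ∃ (s₀ : A) (s : Fin m → A),
      IsSumSq s₀ ∧ (∀ i, IsSumSq (s i)) ∧ x = s₀ + ∑ i, s i * T i},
      σ * a ∈ {x : A | ∃ (s₀ : A) (s : Fin m → A),
      IsSumSq s₀ ∧ (∀ i, IsSumSq (s i)) ∧ x = s₀ + ∑ i, s i * T i} := by
    rintro σ hσ a ⟨s₀, s, hs₀, hs, rfl⟩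
    refine ⟨σ * s₀, fun i => σ * s i, isSumSq_mul hσ hs₀,
      fun i => isSumSq_mul hσ (hs i), ?_⟩
    rw [mul_add, Finset.mul_sum]
    congr 1
    exact Finset.sum_congr rfl (fun i _ => by ring)
  -- membership of sums over finsets
  have hsum_mem : ∀ (s : Finset (Fin m)) (f : Fin m → A),
      (∀ i ∈ s, f i ∈ {x : A | ∃ (s₀ : A) (s : Fin m → A),
        IsSumSq s₀ ∧ (∀ i, IsSumSq (s i)) ∧ x = s₀ + ∑ i, s i * T i}) →
      (∑ i ∈ s, f i) ∈ {x : A | ∃ (s₀ : A) (s : Fin m → A),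
        IsSumSq s₀ ∧ (∀ i, IsSumSq (s i)) ∧ x = s₀ + ∑ i, s i * T i} := by
    intro s
    induction s using Finset.induction with
    | empty => intro f _; simpa using hzero
    | insert _ _ hx ih =>
        rename_i a s'
        intro f hf
        rw [Finset.sum_insert hx]
        exact hadd _ (hf a (Finset.mem_insert_self a s')) _
          (ih f (fun i hi => hf i (Finset.mem_insert_of_mem hi)))
  -- T i * T j is in M
  have hTT : ∀ i j : Fin m, T i * T j ∈ {x : A | ∃ (s₀ : A) (s : Fin m → A),
      IsSumSq s₀ ∧ (∀ i, IsSumSq (s i)) ∧ x = s₀ + ∑ i, s i * T i} := by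
    intro i j
    by_cases hij : i = j
    · subst hij
      exact ⟨T i * T i, fun _ => 0, by simpa using IsSumSq.sq_add (T i) 0 IsSumSq.zero,
        fun _ => IsSumSq.zero, by simp⟩
    · -- T i * T j = (T j * T j) * T i + (T i * T i) * T j
      have key : T i * T j = (T j * T j) * T i + (T i * T i) * T j := by
        have h1 : T i * T j = ∑ k, T i * T j * T k := by
          rw [← Finset.mul_sum, hsum, mul_one]
        have h2 : ∑ k, T i * T j * T k = ∑ k ∈ ({i, j} : Finset (Fin m)), T i * T j * T k := by
          symm
          refine Finset.sum_subset (Finset.subset_univ _) ?_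
          intro k _ hk
          simp only [Finset.mem_insert, Finset.mem_singleton, not_or] at hk
          exact htriple i j k hij (fun h => hk.2 h.symm) (fun h => hk.1 h.symm)
        rw [h1, h2, Finset.sum_pair hij]
        ring
      have sqss : ∀ a : A, IsSumSq (a * a) := fun a => by
        simpa using IsSumSq.sq_add a 0 IsSumSq.zero
      refine ⟨0, fun k => if k = i then T j * T j else if k = j then T i * T i else 0,
        IsSumSq.zero, ?_, ?_⟩
      · intro k
        dsimp only
        split_ifs <;> first | exact sqss _ | exact IsSumSq.zero
      · rw [key, zero_add]
        rw [show (∑ k, (if k = i then T j * T j else if k = j then T i * T i else 0) * T k)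
            = ∑ k ∈ ({i, j} : Finset (Fin m)),
              (if k = i then T j * T j else if k = j then T i * T i else 0) * T k from by
          symm
          refine Finset.sum_subset (Finset.subset_univ _) ?_
          intro k _ hk
          simp only [Finset.mem_insert, Finset.mem_singleton, not_or] at hk
          simp [hk.1, hk.2]]
        rw [Finset.sum_pair hij]
        simp [hij, Ne.symm hij]
  -- main proof
  rintro x ⟨s₀, s, hs₀, hs, rfl⟩ y ⟨t₀, t, ht₀, ht, rfl⟩
  have expand : (s₀ + ∑ i, s i * T i) * (t₀ + ∑ i, t i * T i)
      = s₀ * (t₀ + ∑ i, t i * T i) + (t₀ * 0 + ∑ i, t₀ * s i * T i)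
        + ∑ i, ∑ j, (s i * t j) * (T i * T j) := by
    have h : (∑ i, s i * T i) * (∑ j, t j * T j) = ∑ i, ∑ j, (s i * t j) * (T i * T j) := by
      rw [Finset.sum_mul_sum]
      exact Finset.sum_congr rfl fun i _ => Finset.sum_congr rfl fun j _ => by ring
    have h2 : (∑ i, s i * T i) * t₀ = t₀ * 0 + ∑ i, t₀ * s i * T i := by
      rw [mul_zero, zero_add, Finset.sum_mul]
      exact Finset.sum_congr rfl fun i _ => by ring
    calc (s₀ + ∑ i, s i * T i) * (t₀ + ∑ i, t i * T i)
        = s₀ * (t₀ + ∑ i, t i * T i) + ((∑ i, s i * T i) * t₀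
          + (∑ i, s i * T i) * (∑ j, t j * T j)) := by ring
      _ = _ := by rw [h, h2]; ring
  rw [expand]
  refine hadd _ (hadd _ ?_ _ ?_) _ ?_
  · exact hsmul s₀ hs₀ _ ⟨t₀, t, ht₀, ht, rfl⟩
  · exact ⟨0, fun i => t₀ * s i, IsSumSq.zero, fun i => isSumSq_mul ht₀ (hs i), by simp⟩
  · refine hsum_mem _ _ (fun i _ => hsum_mem _ _ (fun j _ => ?_))
    exact hsmul _ (isSumSq_mul (hs i) (ht j)) _ (hTT i j)
end

section
/- The element F = (u², v², w²) of the ring A = {(f,g,h) ∈ ℝ[u]×ℝ[v]×ℝ[w] : f(1)=g(-1), g(1)=h(-1), h(1)=f(-1)} is not a square in A. -/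
open Polynomial

/-- Gluing condition for the ring of piecewise polynomials on the boundary of a triangle. -/
def Glued (p : Polynomial ℝ × Polynomial ℝ × Polynomial ℝ) : Prop :=
  p.1.eval 1 = p.2.1.eval (-1) ∧ p.2.1.eval 1 = p.2.2.eval (-1) ∧ p.2.2.eval 1 = p.1.eval (-1)

lemma sq_eq_X_sq (p : Polynomial ℝ) (h : p ^ 2 = X ^ 2) : p = X ∨ p = -X := by
  have : (p - X) * (p + X) = 0 := by ring_nf; linear_combination h
  rcases mul_eq_zero.1 this with h' | h'
  · left; exact sub_eq_zero.1 h'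
  · right; exact eq_neg_of_add_eq_zero_left h'

/-- `(u²,v²,w²)` is not a square in the glued ring. -/
theorem stmt13 :
    ¬ ∃ g : Polynomial ℝ × Polynomial ℝ × Polynomial ℝ,
      Glued g ∧ g ^ 2 = ((X ^ 2, X ^ 2, X ^ 2) : Polynomial ℝ × Polynomial ℝ × Polynomial ℝ) := by
  rintro ⟨⟨a, b, c⟩, ⟨h1, h2, h3⟩, hsq⟩
  rw [Prod.ext_iff, Prod.ext_iff] at hsq
  obtain ⟨ha, hb, hc⟩ := hsq
  simp only [Prod.pow_fst, Prod.pow_snd] at ha hb hc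
  simp only [Glued] at h1 h2 h3
  rcases sq_eq_X_sq a ha with rfl | rfl <;>
  rcases sq_eq_X_sq b hb with rfl | rfl <;>
  rcases sq_eq_X_sq c hc with rfl | rfl <;>
  simp only [eval_X, eval_neg] at h1 h2 h3 <;> linarith
end
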